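/- arXiv:2009.05138 — 5 statements merged into one kernel-verified Lean document; each statement's English description precedes it below -/
import Mathlib

section
/- Let n ≥ 1 and let μ : Fin n → ℝ be antitone (μ(1) ≥ μ(2) ≥ … ≥ μ(n)) with values in [0,1], and let q : Fin n → ℝ have values in [0,1]. Then the identity ranking maximizes the cascade reward: for every permutation π of Fin n, Σ_{j=1}^{n} Q(j)·(∏_{r<j}(1−μ(r)))·μ(j) ≥ Σ_{j=1}^{n} Q(j)·(∏_{r<j}(1−μ(π(r))))·μ(π(j)). -/
private lemma aux_le_strictMono {k : ℕ} (g : Fin k → ℕ) (hg : StrictMono g) (x : Fin k) :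
    (x : ℕ) ≤ g x := by
  obtain ⟨m, hmk⟩ := x
  induction m with
  | zero => exact Nat.zero_le _
  | succ p ih =>
    have hp : p < k := Nat.lt_of_succ_lt hmk
    have h1 := ih hp
    have h2 : g ⟨p, hp⟩ < g ⟨p + 1, hmk⟩ := hg (by simp [Fin.lt_def])
    simpa using Nat.lt_of_le_of_lt h1 h2

private lemma key_prod (n m : ℕ) (hm : m ≤ n) (μ : Fin n → ℝ)
    (hanti : Antitone μ) (hμ1 : ∀ i, μ i ≤ 1)
    (f : Fin m → Fin n) (hf : Function.Injective f) :
    ∏ x : Fin m, (1 - μ (Fin.castLE hm x)) ≤ ∏ x : Fin m, (1 - μ (f x)) := by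
  classical
  set S : Finset (Fin n) := Finset.image f Finset.univ with hS
  have hcard : S.card = m := by
    rw [hS, Finset.card_image_of_injective _ hf, Finset.card_univ, Fintype.card_fin]
  set e := S.orderEmbOfFin hcard with he
  have himg : Finset.image (fun x => e x) Finset.univ = S := by
    apply Finset.eq_of_subset_of_card_le
    · intro i hi
      simp only [Finset.mem_image, Finset.mem_univ, true_and] at hi
      obtain ⟨x, hx⟩ := hi
      rw [← hx]; exact S.orderEmbOfFin_mem hcard x
    · rw [hcard, Finset.card_image_of_injective _ e.injective, Finset.card_univ,
        Fintype.card_fin]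
  have heq : ∏ x : Fin m, (1 - μ (f x)) = ∏ x : Fin m, (1 - μ (e x)) := by
    have h1 : ∏ i ∈ S, (1 - μ i) = ∏ x : Fin m, (1 - μ (f x)) := by
      rw [hS]; exact Finset.prod_image (fun x _ y _ h => hf h)
    have h2 : ∏ i ∈ S, (1 - μ i) = ∏ x : Fin m, (1 - μ (e x)) := by
      rw [← himg]; exact Finset.prod_image (fun x _ y _ h => e.injective h)
    rw [← h1, h2]
  rw [heq]
  apply Finset.prod_le_prod
  · intro x _; linarith [hμ1 (Fin.castLE hm x)]
  · intro x _
    have hle : Fin.castLE hm x ≤ e x := by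
      rw [Fin.le_def]
      exact aux_le_strictMono (fun y => ((e y : Fin n) : ℕ))
        (fun a b hab => by exact_mod_cast e.strictMono hab) x
    linarith [hanti hle]

private lemma abel_sum (Q D : ℕ → ℝ) (hQ0 : ∀ j, 0 ≤ Q j)
    (hQa : ∀ j, Q (j + 1) ≤ Q j) (hD0 : D 0 = 0) :
    ∀ m, (∀ j ≤ m, D j ≤ 0) →
      -(Q m * D m) ≤ ∑ j ∈ Finset.range m, Q j * (D j - D (j + 1)) := by
  intro m
  induction m with
  | zero => intro _; simp [hD0]
  | succ p ih =>
    intro hD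
    rw [Finset.sum_range_succ]
    have h1 := ih (fun j hj => hD j (Nat.le_succ_of_le hj))
    have h2 := hQa p
    have h3 := hD (p + 1) le_rfl
    have h4 := hQ0 (p + 1)
    nlinarith [mul_nonneg (sub_nonneg.mpr h2) (neg_nonneg.mpr h3)]

private lemma core_ineq (N : ℕ) (a b c : ℕ → ℝ)
    (hc0 : ∀ j, 0 ≤ c j) (hc1 : ∀ j, c j ≤ 1)
    (hab : ∀ m ≤ N, ∏ r ∈ Finset.range m, (1 - a r) ≤ ∏ r ∈ Finset.range m, (1 - b r))
    (habN : ∏ r ∈ Finset.range N, (1 - a r) = ∏ r ∈ Finset.range N, (1 - b r)) :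
    ∑ m ∈ Finset.range N, (∏ r ∈ Finset.range m, (1 - c r)) *
        (∏ r ∈ Finset.range m, (1 - b r)) * b m ≤
      ∑ m ∈ Finset.range N, (∏ r ∈ Finset.range m, (1 - c r)) *
        (∏ r ∈ Finset.range m, (1 - a r)) * a m := by
  have hQ0 : ∀ j, (0:ℝ) ≤ ∏ r ∈ Finset.range j, (1 - c r) :=
    fun j => Finset.prod_nonneg (fun r _ => by linarith [hc1 r])
  have hQa : ∀ j, ∏ r ∈ Finset.range (j + 1), (1 - c r) ≤ ∏ r ∈ Finset.range j, (1 - c r) := by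
    intro j
    rw [Finset.prod_range_succ]
    nlinarith [hQ0 j, hc0 j]
  have habel := abel_sum (fun j => ∏ r ∈ Finset.range j, (1 - c r))
      (fun m => (∏ r ∈ Finset.range m, (1 - a r)) - ∏ r ∈ Finset.range m, (1 - b r))
      hQ0 hQa (by simp) N (fun j hj => by linarith [hab j hj])
  beta_reduce at habel
  rw [habN, sub_self, mul_zero, neg_zero] at habel
  have hdiff : (∑ m ∈ Finset.range N, (∏ r ∈ Finset.range m, (1 - c r)) *
        (∏ r ∈ Finset.range m, (1 - a r)) * a m)
      - ∑ m ∈ Finset.range N, (∏ r ∈ Finset.range m, (1 - c r)) *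
        (∏ r ∈ Finset.range m, (1 - b r)) * b m
      = ∑ j ∈ Finset.range N, (∏ r ∈ Finset.range j, (1 - c r)) *
        (((∏ r ∈ Finset.range j, (1 - a r)) - ∏ r ∈ Finset.range j, (1 - b r))
          - ((∏ r ∈ Finset.range (j + 1), (1 - a r)) - ∏ r ∈ Finset.range (j + 1), (1 - b r))) := by
    rw [← Finset.sum_sub_distrib]
    apply Finset.sum_congr rfl
    intro m _
    rw [Finset.prod_range_succ (f := fun r => 1 - a r),
      Finset.prod_range_succ (f := fun r => 1 - b r)]
    ring
  linarith [habel, hdiff]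

/-- The identity ranking (products sorted in decreasing order of click probability)
maximizes the cascade reward with position-dependent exit probabilities. -/
theorem cascade_identity_ranking_optimal
    (n : ℕ) (hn : 1 ≤ n) (μ q : Fin n → ℝ)
    (hμanti : Antitone μ)
    (hμ0 : ∀ i, 0 ≤ μ i) (hμ1 : ∀ i, μ i ≤ 1)
    (hq0 : ∀ j, 0 ≤ q j) (hq1 : ∀ j, q j ≤ 1)
    (π : Equiv.Perm (Fin n)) :
    ∑ j : Fin n, (∏ r ∈ Finset.Iio j, (1 - q r)) *
        (∏ r ∈ Finset.Iio j, (1 - μ (π r))) * μ (π j) ≤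
      ∑ j : Fin n, (∏ r ∈ Finset.Iio j, (1 - q r)) *
        (∏ r ∈ Finset.Iio j, (1 - μ r)) * μ j := by
  classical
  -- junk-extended functions on ℕ
  let μA : ℕ → ℝ := fun m => if h : m < n then μ ⟨m, h⟩ else 0
  let μB : ℕ → ℝ := fun m => if h : m < n then μ (π ⟨m, h⟩) else 0
  let qN : ℕ → ℝ := fun m => if h : m < n then q ⟨m, h⟩ else 0
  -- conversion of Fin-indexed products over Iio to range products
  have prodIio : ∀ (g : Fin n → ℝ) (g' : ℕ → ℝ), (∀ m (h : m < n), g' m = g ⟨m, h⟩) →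
      ∀ j : Fin n, ∏ r ∈ Finset.Iio j, g r = ∏ r ∈ Finset.range j.val, g' r := by
    intro g g' hg j
    apply Finset.prod_bij (i := fun (r : Fin n) _ => (r : ℕ))
    · intro a ha
      simp only [Finset.mem_Iio, Fin.lt_def] at ha
      simpa using ha
    · intro a _ b _ h; exact Fin.val_injective h
    · intro bb hb
      simp only [Finset.mem_range] at hb
      exact ⟨⟨bb, hb.trans j.isLt⟩, by simp [Finset.mem_Iio, Fin.lt_def, hb], rfl⟩
    · intro aa _; exact (hg aa.val aa.isLt).symm
  have hqN : ∀ m (h : m < n), (fun m => 1 - qN m) m = (fun r : Fin n => 1 - q r) ⟨m, h⟩ := by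
    intro m h; simp only [μA, μB, qN, dif_pos h]
  have hμAe : ∀ m (h : m < n), (fun m => 1 - μA m) m = (fun r : Fin n => 1 - μ r) ⟨m, h⟩ := by
    intro m h; simp only [μA, dif_pos h]
  have hμBe : ∀ m (h : m < n), (fun m => 1 - μB m) m = (fun r : Fin n => 1 - μ (π r)) ⟨m, h⟩ := by
    intro m h; simp only [μB, dif_pos h]
  have hconvL : ∑ j : Fin n, (∏ r ∈ Finset.Iio j, (1 - q r)) *
      (∏ r ∈ Finset.Iio j, (1 - μ (π r))) * μ (π j)
      = ∑ m ∈ Finset.range n, (∏ r ∈ Finset.range m, (1 - qN r)) *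
          (∏ r ∈ Finset.range m, (1 - μB r)) * μB m := by
    rw [← Fin.sum_univ_eq_sum_range (fun m => (∏ r ∈ Finset.range m, (1 - qN r)) *
          (∏ r ∈ Finset.range m, (1 - μB r)) * μB m) n]
    apply Finset.sum_congr rfl
    intro j _
    beta_reduce
    rw [prodIio _ _ hqN j, prodIio _ _ hμBe j]
    have : μB j.val = μ (π j) := by simp only [μB, dif_pos j.isLt]
    rw [this]
  have hconvR : ∑ j : Fin n, (∏ r ∈ Finset.Iio j, (1 - q r)) *
      (∏ r ∈ Finset.Iio j, (1 - μ r)) * μ j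
      = ∑ m ∈ Finset.range n, (∏ r ∈ Finset.range m, (1 - qN r)) *
          (∏ r ∈ Finset.range m, (1 - μA r)) * μA m := by
    rw [← Fin.sum_univ_eq_sum_range (fun m => (∏ r ∈ Finset.range m, (1 - qN r)) *
          (∏ r ∈ Finset.range m, (1 - μA r)) * μA m) n]
    apply Finset.sum_congr rfl
    intro j _
    beta_reduce
    rw [prodIio _ _ hqN j, prodIio _ _ hμAe j]
    have : μA j.val = μ j := by simp only [μA, dif_pos j.isLt]
    rw [this]
  rw [hconvL, hconvR]
  apply core_ineq
  · intro j
    simp only [qN]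
    split_ifs with h
    · exact hq0 ⟨j, h⟩
    · exact le_rfl
  · intro j
    simp only [qN]
    split_ifs with h
    · exact hq1 ⟨j, h⟩
    · linarith
  · intro m hm
    have hA : ∏ r ∈ Finset.range m, (1 - μA r) = ∏ x : Fin m, (1 - μ (Fin.castLE hm x)) := by
      rw [← Fin.prod_univ_eq_prod_range (fun r => 1 - μA r) m]
      apply Finset.prod_congr rfl
      intro x _
      have hx : (x : ℕ) < n := lt_of_lt_of_le x.isLt hm
      simp only [μA, dif_pos hx]
      rfl
    have hBp : ∏ r ∈ Finset.range m, (1 - μB r) = ∏ x : Fin m, (1 - μ (π (Fin.castLE hm x))) := by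
      rw [← Fin.prod_univ_eq_prod_range (fun r => 1 - μB r) m]
      apply Finset.prod_congr rfl
      intro x _
      have hx : (x : ℕ) < n := lt_of_lt_of_le x.isLt hm
      simp only [μB, dif_pos hx]
      rfl
    rw [hA, hBp]
    exact key_prod n m hm μ hμanti hμ1 (fun x => π (Fin.castLE hm x))
      (fun x y hxy => Fin.castLE_injective hm (π.injective hxy))
  · have hA : ∏ r ∈ Finset.range n, (1 - μA r) = ∏ i : Fin n, (1 - μ i) := by
      rw [← Fin.prod_univ_eq_prod_range (fun r => 1 - μA r) n]
      apply Finset.prod_congr rfl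
      intro x _
      simp only [μA, dif_pos x.isLt]
    have hBp : ∏ r ∈ Finset.range n, (1 - μB r) = ∏ i : Fin n, (1 - μ (π i)) := by
      rw [← Fin.prod_univ_eq_prod_range (fun r => 1 - μB r) n]
      apply Finset.prod_congr rfl
      intro x _
      simp only [μB, dif_pos x.isLt]
    rw [hA, hBp, Equiv.prod_comp π (fun i => 1 - μ i)]
end

section
/- Let n ≥ 1, let μ : Fin n → ℝ be antitone (μ(1) ≥ μ(2) ≥ … ≥ μ(n)) with values in [0,1], and let q : Fin n → ℝ have values in [0,1]. Then for every permutation π of Fin n, the gap between the cascade reward of the identity ranking and that of π satisfies: Σ_{j=1}^{n} Q(j)·(∏_{r<j}(1−μ(r)))·μ(j) − Σ_{j=1}^{n} Q(j)·(∏_{r<j}(1−μ(π(r))))·μ(π(j)) ≤ Σ_{j=1}^{n} Q(j)·(∏_{r<j}(1−μ(π(r))))·max(μ(j) − μ(π(j)), 0). -/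
lemma strictMono_le {m n : ℕ} (f : Fin m → Fin n) (hf : StrictMono f) :
    ∀ k : ℕ, ∀ hk : k < m, k ≤ (f ⟨k, hk⟩ : ℕ) := by
  intro k
  induction k with
  | zero => intro _; exact Nat.zero_le _
  | succ k ih =>
    intro hk
    have h1 := ih (Nat.lt_of_succ_lt hk)
    have h2 := hf (show (⟨k, Nat.lt_of_succ_lt hk⟩ : Fin m) < ⟨k+1, hk⟩ from by
      simp [Fin.lt_def])
    simp only [Fin.lt_def] at h2
    omega

lemma prod_initial_le {n : ℕ} (μ : Fin n → ℝ) (hμanti : Antitone μ)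
    (hμ1 : ∀ i, μ i ≤ 1) (j : Fin n) (S : Finset (Fin n)) (hS : S.card = j.1) :
    ∏ r ∈ Finset.Iio j, (1 - μ r) ≤ ∏ i ∈ S, (1 - μ i) := by
  have hm : (j : ℕ) ≤ n := j.2.le
  set emb := S.orderEmbOfFin hS with hemb
  have h2 : ∏ i ∈ S, (1 - μ i) = ∏ k : Fin j.1, (1 - μ (emb k)) := by
    rw [← Finset.prod_attach S (fun i => 1 - μ i)]
    exact (Fintype.prod_equiv (S.orderIsoOfFin hS).toEquiv _ _ (fun k => rfl)).symm
  have h1 : ∏ r ∈ Finset.Iio j, (1 - μ r) = ∏ k : Fin j.1, (1 - μ (Fin.castLE hm k)) := by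
    refine Finset.prod_bij' (fun r hr => (⟨(r : ℕ), (Finset.mem_Iio.mp hr : r < j)⟩ : Fin j.1))
      (fun k _ => Fin.castLE hm k) ?_ ?_ ?_ ?_ ?_
    · intro a ha; exact Finset.mem_univ _
    · intro k _; simp [Finset.mem_Iio, Fin.lt_def]
    · intro a ha; rfl
    · intro k _; rfl
    · intro a ha; rfl
  rw [h1, h2]
  apply Finset.prod_le_prod
  · intro k _; linarith [hμ1 (Fin.castLE hm k)]
  · intro k _
    have hk : (k : ℕ) ≤ (emb k : ℕ) := strictMono_le emb emb.strictMono k k.2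
    have : Fin.castLE hm k ≤ emb k := by simp [Fin.le_def]; exact hk
    have := hμanti this
    linarith

/-- The gap between the cascade reward of the identity (optimal) ranking and that of an
arbitrary ranking π is bounded by the sum of per-position gap terms. -/
theorem cascade_reward_gap_decomposition
    (n : ℕ) (hn : 1 ≤ n) (μ q : Fin n → ℝ)
    (hμanti : Antitone μ)
    (hμ0 : ∀ i, 0 ≤ μ i) (hμ1 : ∀ i, μ i ≤ 1)
    (hq0 : ∀ j, 0 ≤ q j) (hq1 : ∀ j, q j ≤ 1)
    (π : Equiv.Perm (Fin n)) :
    (∑ j : Fin n, (∏ r ∈ Finset.Iio j, (1 - q r)) *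
        (∏ r ∈ Finset.Iio j, (1 - μ r)) * μ j)
      - (∑ j : Fin n, (∏ r ∈ Finset.Iio j, (1 - q r)) *
        (∏ r ∈ Finset.Iio j, (1 - μ (π r))) * μ (π j))
      ≤ ∑ j : Fin n, (∏ r ∈ Finset.Iio j, (1 - q r)) *
        (∏ r ∈ Finset.Iio j, (1 - μ (π r))) * max (μ j - μ (π j)) 0 := by
  rw [← Finset.sum_sub_distrib]
  apply Finset.sum_le_sum
  intro j _
  set Q := ∏ r ∈ Finset.Iio j, (1 - q r) with hQ
  set A := ∏ r ∈ Finset.Iio j, (1 - μ r) with hA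
  set B := ∏ r ∈ Finset.Iio j, (1 - μ (π r)) with hB
  have hQ0 : 0 ≤ Q := Finset.prod_nonneg fun r _ => by linarith [hq1 r]
  have hB0 : 0 ≤ B := Finset.prod_nonneg fun r _ => by linarith [hμ1 (π r)]
  have hAB : A ≤ B := by
    have : B = ∏ i ∈ (Finset.Iio j).image π, (1 - μ i) := by
      rw [Finset.prod_image (fun a _ b _ h => π.injective h)]
    rw [this]
    apply prod_initial_le μ hμanti hμ1 j
    rw [Finset.card_image_of_injective _ π.injective]
    simp
  have hmax : μ j - μ (π j) ≤ max (μ j - μ (π j)) 0 := le_max_left _ _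
  have hμj := hμ0 j
  nlinarith [mul_le_mul_of_nonneg_right (mul_le_mul_of_nonneg_left hAB hQ0) hμj,
    mul_le_mul_of_nonneg_left hmax (mul_nonneg hQ0 hB0)]
end

section
/- Let n, T ≥ 1 be integers, δ ∈ (0,1], μ ∈ [0,1], and F ≥ 0 an integer. Let X̃_1,…,X̃_T be i.i.d. {0,1}-valued random variables with mean μ, and let X_1,…,X_T be {0,1}-valued random variables such that almost surely |{i ∈ {1,…,T} : X_i ≠ X̃_i}| ≤ F. For S ∈ {1,…,T}, let R_S := S^{-1}·Σ_{i=1}^{S} X_i and w(S) := √(log(2nT/δ)/S) + F/S. Then P(there exists S ∈ {1,…,T} with |R_S − μ| > w(S)) ≤ δ²/(n²T). -/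
open MeasureTheory ProbabilityTheory

open Real

lemma amgm_aux (x h : ℝ) : x * h - x * x ≤ 1 / 4 * h ^ 2 := by
  nlinarith [sq_nonneg (h - 2 * x)]

lemma hpos_aux (μ u : ℝ) (hμ0 : 0 ≤ μ) (hμ1 : μ ≤ 1) : 0 < 1 - μ + μ * Real.exp u := by
  rcases eq_or_lt_of_le hμ0 with h | h
  · simp [← h]
  · nlinarith [Real.exp_pos u, mul_pos h (Real.exp_pos u)]

lemma hoeff_mgf_aux (μ : ℝ) (hμ0 : 0 ≤ μ) (hμ1 : μ ≤ 1) {t : ℝ} (ht : 0 ≤ t) :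
    1 - μ + μ * Real.exp t ≤ Real.exp (t * μ + t ^ 2 / 8) := by
  set h : ℝ → ℝ := fun u => 1 - μ + μ * Real.exp u with hh
  have hpos : ∀ u, 0 < h u := by
    intro u
    exact hpos_aux μ u hμ0 hμ1
  have hd_h : ∀ u, HasDerivAt h (μ * Real.exp u) u := by
    intro u
    exact ((Real.hasDerivAt_exp u).const_mul μ).const_add (1 - μ)
  -- φ u = u/4 + μ - μ e^u / h u
  set φ : ℝ → ℝ := fun u => u / 4 + μ - μ * Real.exp u / h u with hφ
  have hd_φ : ∀ u, HasDerivAt φ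
      (1 / 4 - (μ * Real.exp u * h u - μ * Real.exp u * (μ * Real.exp u)) / (h u) ^ 2) u := by
    intro u
    have h1 : HasDerivAt (fun u : ℝ => u / 4 + μ) (1 / 4) u := by
      simpa using (hasDerivAt_id u).div_const 4 |>.add_const μ
    have h2 : HasDerivAt (fun u => μ * Real.exp u / h u)
        ((μ * Real.exp u * h u - μ * Real.exp u * (μ * Real.exp u)) / (h u) ^ 2) u :=
      ((Real.hasDerivAt_exp u).const_mul μ).div (hd_h u) (hpos u).ne'
    exact h1.sub h2
  have hφmono : MonotoneOn φ (Set.Ici (0 : ℝ)) := by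
    apply monotoneOn_of_deriv_nonneg (convex_Ici 0)
    · exact fun u _ => ((hd_φ u).continuousAt).continuousWithinAt
    · exact fun u _ => ((hd_φ u).differentiableAt).differentiableWithinAt
    · intro u _
      rw [(hd_φ u).deriv]
      have hhu := hpos u
      rw [sub_nonneg, div_le_iff₀ (by positivity)]
      have := amgm_aux (μ * Real.exp u) (h u)
      linarith
  have hφ0 : φ 0 = 0 := by simp [hφ, hh]
  have hφnonneg : ∀ u ∈ Set.Ici (0:ℝ), 0 ≤ φ u := by
    intro u hu
    have := hφmono (Set.self_mem_Ici) hu hu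
    rwa [hφ0] at this
  -- q u = u μ + u²/8 - log (h u)
  set q : ℝ → ℝ := fun u => u * μ + u ^ 2 / 8 - Real.log (h u) with hq
  have hd_q : ∀ u, HasDerivAt q (φ u) u := by
    intro u
    have h1 : HasDerivAt (fun u : ℝ => u * μ + u ^ 2 / 8) (μ + 2 * u / 8) u := by
      have := ((hasDerivAt_id u).mul_const μ).add ((hasDerivAt_pow 2 u).div_const 8)
      simpa [Pi.add_def] using this
    have h2 : HasDerivAt (fun u => Real.log (h u)) (μ * Real.exp u / h u) u :=
      (hd_h u).log (hpos u).ne'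
    have := h1.sub h2
    convert this using 1
    show u / 4 + μ - μ * Real.exp u / h u = _
    ring
    all_goals rfl
  have hqmono : MonotoneOn q (Set.Ici (0 : ℝ)) := by
    apply monotoneOn_of_deriv_nonneg (convex_Ici 0)
    · exact fun u _ => ((hd_q u).continuousAt).continuousWithinAt
    · exact fun u _ => ((hd_q u).differentiableAt).differentiableWithinAt
    · intro u hu
      rw [(hd_q u).deriv]
      exact hφnonneg u (interior_subset hu)
  have hq0 : q 0 = 0 := by simp [hq, hh]
  have hqt : 0 ≤ q t := by
    have := hqmono (Set.self_mem_Ici) (Set.mem_Ici.2 ht) ht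
    rwa [hq0] at this
  have : Real.log (h t) ≤ t * μ + t ^ 2 / 8 := by
    simp only [hq] at hqt; linarith
  have := (Real.log_le_iff_le_exp (hpos t)).1 this
  simpa [hh] using this
open MeasureTheory ProbabilityTheory

lemma bern_integrable {Ω : Type*} [MeasurableSpace Ω] (P : Measure Ω) [IsProbabilityMeasure P]
    (Y : Ω → ℝ) (hY : Measurable Y) (h01 : ∀ ω, Y ω = 0 ∨ Y ω = 1) : Integrable Y P := by
  refine (integrable_const (1 : ℝ)).mono' hY.aestronglyMeasurable ?_
  filter_upwards with ω
  rcases h01 ω with h | h <;> simp [h]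

lemma bern_mgf {Ω : Type*} [MeasurableSpace Ω] (P : Measure Ω) [IsProbabilityMeasure P]
    (Y : Ω → ℝ) (hY : Measurable Y) (h01 : ∀ ω, Y ω = 0 ∨ Y ω = 1)
    {ν : ℝ} (hmean : ∫ ω, Y ω ∂P = ν) (t : ℝ) :
    mgf Y P t = 1 - ν + ν * Real.exp t := by
  have hint := bern_integrable P Y hY h01
  have heq : ∀ ω, Real.exp (t * Y ω) = 1 + (Real.exp t - 1) * Y ω := by
    intro ω
    rcases h01 ω with h | h <;> simp [h]
  calc mgf Y P t = ∫ ω, (1 + (Real.exp t - 1) * Y ω) ∂P := by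
        unfold mgf; exact integral_congr_ae (Filter.Eventually.of_forall heq)
    _ = 1 + (Real.exp t - 1) * ν := by
        rw [integral_add (integrable_const 1) (hint.const_mul _), integral_const,
          integral_const_mul, hmean]
        simp
    _ = 1 - ν + ν * Real.exp t := by ring

lemma bern_exp_integrable {Ω : Type*} [MeasurableSpace Ω] (P : Measure Ω) [IsProbabilityMeasure P]
    (Y : Ω → ℝ) (hY : Measurable Y) (h01 : ∀ ω, Y ω = 0 ∨ Y ω = 1) {t : ℝ} (ht : 0 ≤ t) :
    Integrable (fun ω => Real.exp (t * Y ω)) P := by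
  refine (integrable_const (Real.exp t)).mono' ((hY.const_mul t).exp).aestronglyMeasurable ?_
  filter_upwards with ω
  rcases h01 ω with h | h <;>
    simp [h, Real.norm_eq_abs, abs_of_pos (Real.exp_pos _), Real.exp_le_exp, Real.one_le_exp ht]

/-- Chernoff–Hoeffding upper-tail bound for i.i.d.-mean Bernoulli variables. -/
lemma bern_tail {Ω ι : Type*} [MeasurableSpace Ω] (P : Measure Ω) [IsProbabilityMeasure P]
    (Y : ι → Ω → ℝ) (hmeas : ∀ i, Measurable (Y i)) (h01 : ∀ i ω, Y i ω = 0 ∨ Y i ω = 1)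
    (ν : ℝ) (hν0 : 0 ≤ ν) (hν1 : ν ≤ 1) (hmean : ∀ i, ∫ ω, Y i ω ∂P = ν)
    (hind : iIndepFun Y P)
    (s : Finset ι) (hs : 0 < s.card) (a : ℝ) (ha : 0 ≤ a) :
    P {ω | (s.card : ℝ) * ν + a ≤ ∑ i ∈ s, Y i ω}
      ≤ ENNReal.ofReal (Real.exp (-2 * a ^ 2 / s.card)) := by
  set m : ℝ := (s.card : ℝ) with hm
  have hm0 : 0 < m := by rw [hm]; exact_mod_cast hs
  set t : ℝ := 4 * a / m with htdef
  have ht : 0 ≤ t := by positivity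
  have h_int : ∀ i ∈ s, Integrable (fun ω => Real.exp (t * Y i ω)) P :=
    fun i _ => bern_exp_integrable P (Y i) (hmeas i) (h01 i) ht
  have h_int_sum : Integrable (fun ω => Real.exp (t * (∑ i ∈ s, Y i) ω)) P :=
    hind.integrable_exp_mul_sum hmeas h_int
  have key := measure_ge_le_exp_mul_mgf (μ := P) (X := ∑ i ∈ s, Y i) (t := t)
    (m * ν + a) ht h_int_sum
  have hmgf : mgf (∑ i ∈ s, Y i) P t ≤ Real.exp (m * (t * ν + t ^ 2 / 8)) := by
    rw [hind.mgf_sum hmeas s]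
    have hprod : ∀ i ∈ s, mgf (Y i) P t = 1 - ν + ν * Real.exp t :=
      fun i _ => bern_mgf P (Y i) (hmeas i) (h01 i) (hmean i) t
    rw [Finset.prod_congr rfl hprod, Finset.prod_const]
    have hb := hoeff_mgf_aux ν hν0 hν1 ht
    have hbase0 : (0:ℝ) ≤ 1 - ν + ν * Real.exp t := (hpos_aux ν t hν0 hν1).le
    calc (1 - ν + ν * Real.exp t) ^ s.card
        ≤ (Real.exp (t * ν + t ^ 2 / 8)) ^ s.card := pow_le_pow_left₀ hbase0 hb _
      _ = Real.exp (m * (t * ν + t ^ 2 / 8)) := by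
          rw [← Real.exp_nat_mul]
  have hfinal : (P {ω | m * ν + a ≤ (∑ i ∈ s, Y i) ω}).toReal
      ≤ Real.exp (-2 * a ^ 2 / m) := by
    refine key.trans ?_
    calc Real.exp (-t * (m * ν + a)) * mgf (∑ i ∈ s, Y i) P t
        ≤ Real.exp (-t * (m * ν + a)) * Real.exp (m * (t * ν + t ^ 2 / 8)) := by
          exact mul_le_mul_of_nonneg_left hmgf (Real.exp_nonneg _)
      _ = Real.exp (-t * (m * ν + a) + m * (t * ν + t ^ 2 / 8)) := (Real.exp_add _ _).symm
      _ = Real.exp (-2 * a ^ 2 / m) := by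
          congr 1
          rw [htdef]
          field_simp
          ring
  rw [show {ω | m * ν + a ≤ ∑ i ∈ s, Y i ω} = {ω | m * ν + a ≤ (∑ i ∈ s, Y i) ω} by
    simp [Finset.sum_apply]]
  exact (ENNReal.le_ofReal_iff_toReal_le (measure_ne_top _ _) (Real.exp_nonneg _)).2 hfinal
/-- Corrupted concentration claim of Lemma 2: if `X̃ᵢ` are i.i.d. `{0,1}`-valued with
mean `μ` and `Xᵢ` agrees with `X̃ᵢ` except on at most `F` indices (a.s.), then with
probability at least `1 − δ²/(n²T)` every prefix average `R_S` of the `X`'s is within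
the fakeness-robust window `w(S) = √(log(2nT/δ)/S) + F/S` of `μ`. -/
theorem prefix_averages_concentration_corrupted
    {Ω : Type*} [MeasurableSpace Ω] (P : Measure Ω) [IsProbabilityMeasure P]
    (n T : ℕ) (hn : 1 ≤ n) (hT : 1 ≤ T)
    (δ : ℝ) (hδ0 : 0 < δ) (hδ1 : δ ≤ 1)
    (μ : ℝ) (hμ0 : 0 ≤ μ) (hμ1 : μ ≤ 1) (F : ℕ)
    (Xt X : Fin T → Ω → ℝ)
    (hXtmeas : ∀ i, Measurable (Xt i))
    (hXmeas : ∀ i, Measurable (X i))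
    (hXt01 : ∀ i ω, Xt i ω = 0 ∨ Xt i ω = 1)
    (hX01 : ∀ i ω, X i ω = 0 ∨ X i ω = 1)
    (hXtmean : ∀ i, ∫ ω, Xt i ω ∂P = μ)
    (hindep : iIndepFun Xt P)
    (hcorrupt : ∀ᵐ ω ∂P,
      (Finset.univ.filter (fun i : Fin T => X i ω ≠ Xt i ω)).card ≤ F) :
    P {ω | ∃ S ∈ Finset.Icc 1 T,
        Real.sqrt (Real.log (2 * n * T / δ) / S) + (F : ℝ) / S <
          |(S : ℝ)⁻¹ * (∑ i ∈ Finset.univ.filter (fun i : Fin T => (i : ℕ) < S), X i ω) - μ|}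
      ≤ ENNReal.ofReal (δ ^ 2 / (n ^ 2 * T)) := by
  classical
  set L := Real.log (2 * n * T / δ) with hLdef
  have hnT1 : (1:ℝ) ≤ (n:ℝ) := by exact_mod_cast hn
  have hT1 : (1:ℝ) ≤ (T:ℝ) := by exact_mod_cast hT
  have harg : (2:ℝ) ≤ 2 * n * T / δ := by
    rw [le_div_iff₀ hδ0]; nlinarith
  have hL0 : 0 < L := Real.log_pos (by linarith)
  set sS : ℕ → Finset (Fin T) := fun S => Finset.univ.filter (fun i : Fin T => (i:ℕ) < S)
    with hsSdef
  have hcard : ∀ S ∈ Finset.Icc 1 T, (sS S).card = S := by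
    intro S hSmem
    obtain ⟨hS1, hST⟩ := Finset.mem_Icc.mp hSmem
    have hfe : sS S = Finset.attachFin (Finset.range S)
        (fun m hm => lt_of_lt_of_le (Finset.mem_range.mp hm) hST) := by
      ext i; simp [hsSdef, Finset.mem_attachFin]
    rw [hfe, Finset.card_attachFin, Finset.card_range]
  set A : ℕ → Set Ω := fun S =>
    {ω | ((sS S).card : ℝ) * μ + Real.sqrt (S * L) ≤ ∑ i ∈ sS S, Xt i ω} with hAdef
  set B : ℕ → Set Ω := fun S =>
    {ω | ((sS S).card : ℝ) * (1 - μ) + Real.sqrt (S * L) ≤ ∑ i ∈ sS S, (1 - Xt i ω)} with hBdef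
  -- Step 1: a.e. inclusion of the bad event into the union of tail events.
  have hsub : {ω | ∃ S ∈ Finset.Icc 1 T,
        Real.sqrt (L / S) + (F : ℝ) / S <
          |(S : ℝ)⁻¹ * (∑ i ∈ sS S, X i ω) - μ|}
      ≤ᵐ[P] ⋃ S ∈ Finset.Icc 1 T, (A S ∪ B S) := by
    filter_upwards [hcorrupt] with ω hω hmem
    obtain ⟨S, hSmem, hgt⟩ := hmem
    obtain ⟨hS1, hST⟩ := Finset.mem_Icc.mp hSmem
    refine Set.mem_biUnion hSmem ?_
    have hSpos : (0:ℝ) < S := by exact_mod_cast hS1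
    have hS0 : (S:ℝ) ≠ 0 := ne_of_gt hSpos
    set Sx := ∑ i ∈ sS S, X i ω with hSx
    set St := ∑ i ∈ sS S, Xt i ω with hSt
    -- corruption bound
    have hdiff : |Sx - St| ≤ (F:ℝ) := by
      rw [hSx, hSt, ← Finset.sum_sub_distrib]
      calc |∑ i ∈ sS S, (X i ω - Xt i ω)|
          ≤ ∑ i ∈ sS S, |X i ω - Xt i ω| := Finset.abs_sum_le_sum_abs _ _
        _ ≤ ∑ i ∈ sS S, (if X i ω = Xt i ω then (0:ℝ) else 1) := by
            refine Finset.sum_le_sum fun i _ => ?_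
            by_cases hi : X i ω = Xt i ω
            · simp [hi]
            · rcases hX01 i ω with h | h <;> rcases hXt01 i ω with h' | h' <;>
                simp_all <;> norm_num
        _ = (((sS S).filter (fun i => ¬ X i ω = Xt i ω)).card : ℝ) := by
            rw [Finset.sum_ite, Finset.sum_const, Finset.sum_const]; simp
        _ ≤ ((Finset.univ.filter (fun i : Fin T => X i ω ≠ Xt i ω)).card : ℝ) := by
            have : ((sS S).filter (fun i => ¬ X i ω = Xt i ω)) ⊆
                Finset.univ.filter (fun i : Fin T => X i ω ≠ Xt i ω) := by
              intro i hi
              simp only [Finset.mem_filter] at hi ⊢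
              exact ⟨Finset.mem_univ _, hi.2⟩
            exact_mod_cast Finset.card_le_card this
        _ ≤ (F:ℝ) := by exact_mod_cast hω
    -- rescale the hypothesis by S
    have hsqrt : Real.sqrt (L / S) * S = Real.sqrt (S * L) := by
      have hsS0 : Real.sqrt S ≠ 0 := ne_of_gt (Real.sqrt_pos.2 hSpos)
      have h1 : Real.sqrt (L / S) = Real.sqrt L / Real.sqrt S := Real.sqrt_div hL0.le _
      have h2 : (S:ℝ) = Real.sqrt S * Real.sqrt S := (Real.mul_self_sqrt hSpos.le).symm
      rw [h1, Real.sqrt_mul hSpos.le]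
      field_simp
      linear_combination h2
    have h2 : Real.sqrt (S * L) + (F:ℝ) < |Sx - S * μ| := by
      have hmul := mul_lt_mul_of_pos_right hgt hSpos
      have habs : |(S : ℝ)⁻¹ * Sx - μ| * S = |Sx - S * μ| := by
        rw [← abs_of_pos hSpos, ← abs_mul, abs_of_pos hSpos]
        congr 1
        field_simp
      rw [habs] at hmul
      calc Real.sqrt (S * L) + (F:ℝ)
          = (Real.sqrt (L / S) + (F:ℝ) / S) * S := by
            rw [add_mul, hsqrt, div_mul_cancel₀ _ hS0]
        _ < |Sx - S * μ| := hmul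
    have h3 : Real.sqrt (S * L) < |St - S * μ| := by
      have htri : |Sx - S * μ| ≤ |Sx - St| + |St - S * μ| := by
        have := abs_add_le (Sx - St) (St - S * μ)
        simpa using this
      linarith
    rcases lt_abs.mp h3 with hcase | hcase
    · left
      show ((sS S).card : ℝ) * μ + Real.sqrt (S * L) ≤ St
      rw [hcard S hSmem]
      linarith
    · right
      show ((sS S).card : ℝ) * (1 - μ) + Real.sqrt (S * L) ≤ ∑ i ∈ sS S, (1 - Xt i ω)
      have hsum : ∑ i ∈ sS S, (1 - Xt i ω) = ((sS S).card : ℝ) - St := by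
        rw [Finset.sum_sub_distrib, Finset.sum_const, hSt]
        simp
      rw [hsum, hcard S hSmem]
      have : Real.sqrt (S * L) < S * μ - St := by linarith
      linarith
  -- Step 2: tail bounds for each S.
  have hexp0 : (0:ℝ) ≤ Real.exp (-2 * L) := Real.exp_nonneg _
  have hboundA : ∀ S ∈ Finset.Icc 1 T, P (A S) ≤ ENNReal.ofReal (Real.exp (-2 * L)) := by
    intro S hSmem
    obtain ⟨hS1, hST⟩ := Finset.mem_Icc.mp hSmem
    have hSpos : (0:ℝ) < S := by exact_mod_cast hS1
    have hcpos : 0 < (sS S).card := by rw [hcard S hSmem]; exact hS1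
    have := bern_tail P Xt hXtmeas hXt01 μ hμ0 hμ1 hXtmean hindep (sS S) hcpos
      (Real.sqrt (S * L)) (Real.sqrt_nonneg _)
    have heq : Real.exp (-2 * Real.sqrt (S * L) ^ 2 / (sS S).card) = Real.exp (-2 * L) := by
      rw [Real.sq_sqrt (by positivity), hcard S hSmem]
      congr 1
      field_simp
    rw [heq] at this
    exact this
  have hboundB : ∀ S ∈ Finset.Icc 1 T, P (B S) ≤ ENNReal.ofReal (Real.exp (-2 * L)) := by
    intro S hSmem
    obtain ⟨hS1, hST⟩ := Finset.mem_Icc.mp hSmem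
    have hSpos : (0:ℝ) < S := by exact_mod_cast hS1
    have hcpos : 0 < (sS S).card := by rw [hcard S hSmem]; exact hS1
    have hind' : iIndepFun (fun i => fun ω => 1 - Xt i ω) P := by
      have := hindep.comp (fun _ (x:ℝ) => 1 - x) (fun _ => measurable_const.sub measurable_id)
      exact this
    have := bern_tail P (fun i ω => 1 - Xt i ω)
      (fun i => measurable_const.sub (hXtmeas i))
      (fun i ω => by rcases hXt01 i ω with h | h <;> simp [h])
      (1 - μ) (by linarith) (by linarith)
      (fun i => by
        rw [integral_sub (integrable_const _)
          (bern_integrable P (Xt i) (hXtmeas i) (hXt01 i)), integral_const, hXtmean]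
        simp)
      hind' (sS S) hcpos (Real.sqrt (S * L)) (Real.sqrt_nonneg _)
    have heq : Real.exp (-2 * Real.sqrt (S * L) ^ 2 / (sS S).card) = Real.exp (-2 * L) := by
      rw [Real.sq_sqrt (by positivity), hcard S hSmem]
      congr 1
      field_simp
    rw [heq] at this
    exact this
  -- Step 3: put everything together.
  refine le_trans (measure_mono_ae hsub) ?_
  calc P (⋃ S ∈ Finset.Icc 1 T, (A S ∪ B S))
    _ ≤ ∑ S ∈ Finset.Icc 1 T, P (A S ∪ B S) := measure_biUnion_finset_le _ _
    _ ≤ ∑ S ∈ Finset.Icc 1 T,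
          (ENNReal.ofReal (Real.exp (-2 * L)) + ENNReal.ofReal (Real.exp (-2 * L))) :=
        Finset.sum_le_sum fun S hS =>
          (measure_union_le _ _).trans (add_le_add (hboundA S hS) (hboundB S hS))
    _ = (Finset.Icc 1 T).card •
          (ENNReal.ofReal (Real.exp (-2 * L)) + ENNReal.ofReal (Real.exp (-2 * L))) :=
        Finset.sum_const _
    _ ≤ ENNReal.ofReal (δ ^ 2 / (n ^ 2 * T)) := by
        rw [Nat.card_Icc]
        simp only [Nat.add_sub_cancel]
        rw [← ENNReal.ofReal_add hexp0 hexp0, nsmul_eq_mul, ← ENNReal.ofReal_natCast T,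
          ← ENNReal.ofReal_mul (by positivity)]
        apply ENNReal.ofReal_le_ofReal
        have hexpL : Real.exp L = 2 * n * T / δ := Real.exp_log (by linarith)
        have hval : Real.exp (-2 * L) = δ ^ 2 / (4 * n ^ 2 * T ^ 2) := by
          rw [show (-2 * L) = -(L + L) by ring, Real.exp_neg, Real.exp_add, hexpL]
          rw [eq_div_iff (by positivity)]
          field_simp
          ring
        rw [hval]
        rw [show (T:ℝ) * (δ ^ 2 / (4 * n ^ 2 * T ^ 2) + δ ^ 2 / (4 * n ^ 2 * T ^ 2))
            = δ ^ 2 / (2 * n ^ 2 * T) from by field_simp; ring]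
        rw [div_le_div_iff₀ (by positivity) (by positivity)]
        have hnn : (0:ℝ) ≤ δ ^ 2 * ((n:ℝ) ^ 2 * T) := by positivity
        nlinarith
end

section
/- Let n, T ≥ 1 be integers, δ ∈ (0,1], μ ∈ [0,1], and ℓ ≥ 1 an integer. Let X_1,…,X_T and Y_1,…,Y_T be 2T jointly independent {0,1}-valued random variables, each with mean μ. For η₁, η₂ ∈ {0,1,…,T} with η̂ := η₁ + η₂/2^ℓ > 0, define x̂(η₁,η₂) := η̂^{-1}·( Σ_{i=1}^{η₁} X_i + 2^{-ℓ}·Σ_{i=1}^{η₂} Y_i ). Then P( there exist η₁, η₂ ∈ {0,…,T} with η₁ + η₂ > 0 and |x̂(η₁,η₂) − μ| > √((3/2)·log(4nT/δ)/η̂) ) ≤ δ³/(8n³T). -/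
open MeasureTheory ProbabilityTheory
open Real
open scoped ENNReal NNReal

section AuxForc

/-- Hoeffding's lemma, Bernoulli form. -/
lemma hoeff_core (p : ℝ) (hp0 : 0 ≤ p) (hp1 : p ≤ 1) (x : ℝ) :
    (1 - p) * exp (-(p * x)) + p * exp ((1 - p) * x) ≤ exp (x ^ 2 / 8) := by
  rcases eq_or_lt_of_le hp0 with h0 | h0
  · simp only [← h0, sub_zero, zero_mul, neg_zero, exp_zero, one_mul, mul_zero, zero_add,
      add_zero, one_mul]
    simpa using Real.one_le_exp (show (0:ℝ) ≤ x^2/8 by positivity)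
  rcases eq_or_lt_of_le hp1 with h1 | h1
  · rw [h1]
    norm_num
    simpa using Real.one_le_exp (show (0:ℝ) ≤ x^2/8 by positivity)
  -- main case 0 < p < 1
  set a : ℝ → ℝ := fun y => (1 - p) * exp (-(p * y)) with ha_def
  set b : ℝ → ℝ := fun y => p * exp ((1 - p) * y) with hb_def
  set g : ℝ → ℝ := fun y => a y + b y with hg_def
  have hq : (0:ℝ) < 1 - p := by linarith
  have hapos : ∀ y, 0 < a y := fun y => mul_pos hq (exp_pos _)
  have hbpos : ∀ y, 0 < b y := fun y => mul_pos h0 (exp_pos _)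
  have hgpos : ∀ y, 0 < g y := fun y => add_pos (hapos y) (hbpos y)
  have hA : ∀ y : ℝ, HasDerivAt a (-p * a y) y := by
    intro y
    have h1 : HasDerivAt (fun y : ℝ => -(p * y)) (-p) y := by
      exact (((hasDerivAt_id y).const_mul p).neg).congr_deriv (by ring)
    have := (h1.exp).const_mul (1 - p)
    refine this.congr_deriv ?_; symm
    simp only [ha_def]; ring
  have hB : ∀ y : ℝ, HasDerivAt b ((1 - p) * b y) y := by
    intro y
    have h1 : HasDerivAt (fun y : ℝ => (1 - p) * y) (1 - p) y := by
      simpa using (hasDerivAt_id y).const_mul (1 - p)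
    have := (h1.exp).const_mul p
    refine this.congr_deriv ?_; symm
    simp only [hb_def]; ring
  set G : ℝ → ℝ := fun y => (1 - p) * b y - p * a y with hG_def
  have hg : ∀ y : ℝ, HasDerivAt g (G y) y := by
    intro y
    have := (hA y).add (hB y)
    refine this.congr_deriv ?_; symm
    simp only [hG_def]; ring
  have hGd : ∀ y : ℝ, HasDerivAt G ((1 - p) ^ 2 * b y + p ^ 2 * a y) y := by
    intro y
    have := ((hB y).const_mul (1 - p)).sub ((hA y).const_mul p)
    refine this.congr_deriv ?_; symm
    ring
  set φ : ℝ → ℝ := fun y => y / 4 - G y / g y with hφ_def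
  have hφd : ∀ y : ℝ, HasDerivAt φ (1 / 4 - a y * b y / (g y) ^ 2) y := by
    intro y
    have hq := (hGd y).div (hg y) (hgpos y).ne'
    have := ((hasDerivAt_id y).div_const 4).sub hq
    refine this.congr_deriv ?_; symm
    have hgne : g y ≠ 0 := (hgpos y).ne'
    field_simp
    simp only [hG_def, hg_def]
    ring
  have hφ0 : φ 0 = 0 := by
    simp only [hφ_def, hG_def, ha_def, hb_def, hg_def]
    norm_num
    ring
  have hφderiv_nonneg : ∀ y : ℝ, 0 ≤ 1 / 4 - a y * b y / (g y) ^ 2 := by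
    intro y
    have h4 : a y * b y / (g y) ^ 2 ≤ 1 / 4 := by
      rw [div_le_iff₀ (pow_pos (hgpos y) 2)]
      have := sq_nonneg (a y - b y)
      simp only [hg_def]
      nlinarith
    linarith
  have hφmono : Monotone φ := by
    apply monotone_of_deriv_nonneg (fun y => (hφd y).differentiableAt)
    intro y
    rw [(hφd y).deriv]
    exact hφderiv_nonneg y
  -- h
  set h : ℝ → ℝ := fun y => y ^ 2 / 8 - Real.log (g y) with hh_def
  have hhd : ∀ y : ℝ, HasDerivAt h (φ y) y := by
    intro y
    have hl : HasDerivAt (fun y => Real.log (g y)) (G y / g y) y := (hg y).log (hgpos y).ne'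
    have := ((hasDerivAt_pow 2 y).div_const 8).sub hl
    refine this.congr_deriv ?_; symm
    simp only [hφ_def]
    ring
  have hh0 : h 0 = 0 := by
    simp only [hh_def, hg_def, ha_def, hb_def]
    norm_num
  have hnonneg : ∀ y : ℝ, 0 ≤ h y := by
    intro y
    rcases le_total 0 y with hy | hy
    · have hmono : MonotoneOn h (Set.Ici 0) := by
        apply monotoneOn_of_deriv_nonneg (convex_Ici 0)
        · exact fun z _ => ((hhd z).differentiableAt).continuousAt.continuousWithinAt
        · exact fun z _ => ((hhd z).differentiableAt).differentiableWithinAt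
        · intro z hz
          rw [(hhd z).deriv]
          rw [interior_Ici] at hz
          have := hφmono (le_of_lt hz)
          rw [hφ0] at this
          exact this
      have := hmono (Set.self_mem_Ici) hy hy
      rwa [hh0] at this
    · have hmono : AntitoneOn h (Set.Iic 0) := by
        apply antitoneOn_of_deriv_nonpos (convex_Iic 0)
        · exact fun z _ => ((hhd z).differentiableAt).continuousAt.continuousWithinAt
        · exact fun z _ => ((hhd z).differentiableAt).differentiableWithinAt
        · intro z hz
          rw [(hhd z).deriv]
          rw [interior_Iic] at hz
          have := hφmono (le_of_lt hz)
          rw [hφ0] at this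
          exact this
      have := hmono hy (Set.self_mem_Iic) hy
      rwa [hh0] at this
  have hx := hnonneg x
  have hlog : Real.log (g x) ≤ x ^ 2 / 8 := by simp only [hh_def] at hx; linarith
  have := (Real.log_le_iff_le_exp (hgpos x)).mp hlog
  simpa [hg_def, ha_def, hb_def] using this

lemma integrable_of_bdd {Ω : Type*} [MeasurableSpace Ω] {P : Measure Ω} [IsProbabilityMeasure P]
    {f : Ω → ℝ} (hf : Measurable f) {C : ℝ} (hC : ∀ ω, |f ω| ≤ C) : Integrable f P :=
  (integrable_const C).mono' hf.aestronglyMeasurable (ae_of_all _ (by simpa using hC))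

/-- mgf bound for a `{0,1}`-valued variable with mean `p`. -/
lemma bern_mgf_s10 {Ω : Type*} [MeasurableSpace Ω] (P : Measure Ω) [IsProbabilityMeasure P]
    {Z : Ω → ℝ} (hZm : Measurable Z) (hZ01 : ∀ ω, Z ω = 0 ∨ Z ω = 1)
    {p : ℝ} (hp0 : 0 ≤ p) (hp1 : p ≤ 1) (hmean : ∫ ω, Z ω ∂P = p) (s : ℝ) :
    ∫ ω, exp (s * Z ω) ∂P ≤ exp (s * p + s ^ 2 / 8) := by
  have hZint : Integrable Z P := integrable_of_bdd hZm (C := 1)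
    (fun ω => by rcases hZ01 ω with h | h <;> simp [h])
  have hpt : ∀ ω, exp (s * Z ω) = 1 + Z ω * (exp s - 1) := by
    intro ω; rcases hZ01 ω with h | h <;> simp [h]
  have hint : ∫ ω, exp (s * Z ω) ∂P = 1 + p * (exp s - 1) := by
    rw [show (fun ω => exp (s * Z ω)) = fun ω => 1 + Z ω * (exp s - 1) from funext hpt]
    rw [integral_add (integrable_const 1) (hZint.mul_const _), integral_const,
      integral_mul_const, hmean]
    simp
  rw [hint]
  have key := hoeff_core p hp0 hp1 s
  have hmul : exp (s * p) * ((1 - p) * exp (-(p * s)) + p * exp ((1 - p) * s))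
      = 1 + p * (exp s - 1) := by
    rw [mul_add, mul_comm (exp (s*p)) ((1-p) * exp (-(p*s))), mul_comm (exp (s*p)) (p * exp ((1-p)*s)),
      mul_assoc, mul_assoc, ← exp_add, ← exp_add,
      show -(p*s) + s*p = 0 by ring, show (1-p)*s + s*p = s by ring, exp_zero]
    ring
  calc 1 + p * (exp s - 1)
      = exp (s * p) * ((1 - p) * exp (-(p * s)) + p * exp ((1 - p) * s)) := hmul.symm
    _ ≤ exp (s * p) * exp (s ^ 2 / 8) := by
        apply mul_le_mul_of_nonneg_left key (exp_pos _).le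
    _ = exp (s * p + s ^ 2 / 8) := (exp_add _ _).symm

/-- One-sided Chernoff–Hoeffding tail for a weighted sum of independent Bernoullis. -/
lemma weighted_tail {Ω : Type*} [MeasurableSpace Ω] (P : Measure Ω) [IsProbabilityMeasure P]
    {ι : Type*} [Fintype ι] (Z : ι → Ω → ℝ)
    (hind : iIndepFun Z P)
    (hmeas : ∀ i, Measurable (Z i)) (h01 : ∀ i ω, Z i ω = 0 ∨ Z i ω = 1)
    {p : ℝ} (hp0 : 0 ≤ p) (hp1 : p ≤ 1) (hmean : ∀ i, ∫ ω, Z i ω ∂P = p)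
    (w : ι → ℝ) (hw : ∀ i, 0 ≤ w i) {t₀ : ℝ} (ht₀ : 0 < t₀)
    (hW2 : 0 < ∑ i, w i ^ 2) :
    (P {ω | t₀ ≤ (∑ i, w i * Z i ω) - (∑ i, w i) * p}).toReal
      ≤ exp (-(2 * t₀ ^ 2 / ∑ i, w i ^ 2)) := by
  classical
  set W2 : ℝ := ∑ i, w i ^ 2 with hW2def
  set W : ℝ := ∑ i, w i with hWdef
  set lam : ℝ := 4 * t₀ / W2 with hlam
  have hlam_pos : 0 < lam := by positivity
  set V : ι → Ω → ℝ := fun i ω => w i * Z i ω with hV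
  have hVmeas : ∀ i, Measurable (V i) := fun i => (hmeas i).const_mul _
  have hVind : iIndepFun V P := by
    have := hind.comp (g := fun i (x : ℝ) => w i * x) (fun i => measurable_const_mul _)
    exact this
  have hVint : ∀ i, Integrable (fun ω => exp (lam * V i ω)) P := by
    intro i
    apply integrable_of_bdd ((hVmeas i).const_mul lam).exp (C := exp (lam * w i))
    intro ω
    rw [abs_of_pos (exp_pos _), exp_le_exp]
    rcases h01 i ω with h | h <;> simp only [hV, h, mul_zero, mul_one]
    · exact mul_nonneg hlam_pos.le (hw i)
    · exact le_refl _
  have hS : Integrable (fun ω => exp (lam * (∑ i, V i) ω)) P :=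
    hVind.integrable_exp_mul_sum hVmeas (fun i _ => hVint i)
  have chern := measure_ge_le_exp_mul_mgf (X := ∑ i, V i) (μ := P) (t := lam)
    (W * p + t₀) hlam_pos.le hS
  have hset : {ω | t₀ ≤ (∑ i, w i * Z i ω) - W * p} = {ω | W * p + t₀ ≤ (∑ i, V i) ω} := by
    ext ω
    simp only [Set.mem_setOf_eq, Finset.sum_apply, hV]
    constructor <;> intro h <;> linarith
  have hmgf : mgf (∑ i, V i) P lam ≤ exp (lam * (W * p) + lam ^ 2 * W2 / 8) := by
    rw [hVind.mgf_sum hVmeas Finset.univ]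
    have hbd : ∀ i ∈ Finset.univ, mgf (V i) P lam ≤ exp (lam * w i * p + (lam * w i) ^ 2 / 8) := by
      intro i _
      have hb := bern_mgf_s10 P (hmeas i) (h01 i) hp0 hp1 (hmean i) (lam * w i)
      have heq : mgf (V i) P lam = ∫ ω, exp (lam * w i * Z i ω) ∂P := by
        simp only [mgf, hV]
        congr 1 with ω
        rw [mul_assoc]
      rw [heq]
      exact hb
    calc ∏ i, mgf (V i) P lam
        ≤ ∏ i, exp (lam * w i * p + (lam * w i) ^ 2 / 8) :=
          Finset.prod_le_prod (fun i _ => mgf_nonneg) hbd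
      _ = exp (∑ i, (lam * w i * p + (lam * w i) ^ 2 / 8)) := (Real.exp_sum _ _).symm
      _ = exp (lam * (W * p) + lam ^ 2 * W2 / 8) := by
          congr 1
          have hterm : ∀ i, lam * w i * p + (lam * w i) ^ 2 / 8
              = p * lam * w i + lam ^ 2 / 8 * w i ^ 2 := fun i => by ring
          simp_rw [hterm]
          rw [Finset.sum_add_distrib, ← Finset.mul_sum, ← Finset.mul_sum, ← hWdef, ← hW2def]
          ring
  calc (P {ω | t₀ ≤ (∑ i, w i * Z i ω) - W * p}).toReal
      ≤ exp (-lam * (W * p + t₀)) * mgf (∑ i, V i) P lam := by rw [hset]; exact chern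
    _ ≤ exp (-lam * (W * p + t₀)) * exp (lam * (W * p) + lam ^ 2 * W2 / 8) :=
        mul_le_mul_of_nonneg_left hmgf (exp_pos _).le
    _ = exp (-lam * (W * p + t₀) + (lam * (W * p) + lam ^ 2 * W2 / 8)) := (exp_add _ _).symm
    _ = exp (-(2 * t₀ ^ 2 / W2)) := by
        congr 1
        rw [hlam]
        field_simp
        ring

/-- Two-sided tail, ENNReal form. -/
lemma weighted_tail_two {Ω : Type*} [MeasurableSpace Ω] (P : Measure Ω) [IsProbabilityMeasure P]
    {ι : Type*} [Fintype ι] (Z : ι → Ω → ℝ)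
    (hind : iIndepFun Z P)
    (hmeas : ∀ i, Measurable (Z i)) (h01 : ∀ i ω, Z i ω = 0 ∨ Z i ω = 1)
    {p : ℝ} (hp0 : 0 ≤ p) (hp1 : p ≤ 1) (hmean : ∀ i, ∫ ω, Z i ω ∂P = p)
    (w : ι → ℝ) (hw : ∀ i, 0 ≤ w i) {t₀ : ℝ} (ht₀ : 0 < t₀)
    (hW2 : 0 < ∑ i, w i ^ 2) :
    P {ω | t₀ ≤ |(∑ i, w i * Z i ω) - (∑ i, w i) * p|}
      ≤ ENNReal.ofReal (2 * exp (-(2 * t₀ ^ 2 / ∑ i, w i ^ 2))) := by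
  classical
  have hup := weighted_tail P Z hind hmeas h01 hp0 hp1 hmean w hw ht₀ hW2
  -- lower tail via 1 - Z
  have hlowraw := weighted_tail P (fun i ω => 1 - Z i ω)
    (hind.comp (g := fun _ (x : ℝ) => 1 - x) (fun _ => measurable_const.sub measurable_id))
    (fun i => measurable_const.sub (hmeas i))
    (fun i ω => by rcases h01 i ω with h | h <;> simp [h])
    (p := 1 - p) (by linarith) (by linarith)
    (fun i => by
      have hZint : Integrable (Z i) P := integrable_of_bdd (hmeas i) (C := 1)
        (fun ω => by rcases h01 i ω with h | h <;> simp [h])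
      rw [integral_sub (integrable_const 1) hZint, integral_const, hmean i]
      simp)
    w hw ht₀ hW2
  have hseteq : {ω | t₀ ≤ (∑ i, w i * (1 - Z i ω)) - (∑ i, w i) * (1 - p)}
      = {ω | t₀ ≤ (∑ i, w i) * p - ∑ i, w i * Z i ω} := by
    ext ω
    simp only [Set.mem_setOf_eq, mul_sub, mul_one, Finset.sum_sub_distrib]
    constructor <;> intro h <;> linarith
  rw [hseteq] at hlowraw
  have hsub : {ω | t₀ ≤ |(∑ i, w i * Z i ω) - (∑ i, w i) * p|}
      ⊆ {ω | t₀ ≤ (∑ i, w i * Z i ω) - (∑ i, w i) * p}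
        ∪ {ω | t₀ ≤ (∑ i, w i) * p - ∑ i, w i * Z i ω} := by
    intro ω hω
    simp only [Set.mem_setOf_eq, Set.mem_union] at *
    rcases le_abs.mp hω with h | h
    · exact Or.inl h
    · exact Or.inr (by linarith)
  calc P {ω | t₀ ≤ |(∑ i, w i * Z i ω) - (∑ i, w i) * p|}
      ≤ P ({ω | t₀ ≤ (∑ i, w i * Z i ω) - (∑ i, w i) * p}
          ∪ {ω | t₀ ≤ (∑ i, w i) * p - ∑ i, w i * Z i ω}) := measure_mono hsub
    _ ≤ P {ω | t₀ ≤ (∑ i, w i * Z i ω) - (∑ i, w i) * p}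
        + P {ω | t₀ ≤ (∑ i, w i) * p - ∑ i, w i * Z i ω} := measure_union_le _ _
    _ ≤ ENNReal.ofReal (exp (-(2 * t₀ ^ 2 / ∑ i, w i ^ 2)))
        + ENNReal.ofReal (exp (-(2 * t₀ ^ 2 / ∑ i, w i ^ 2))) := by
        gcongr
        · rw [← ENNReal.ofReal_toReal (measure_ne_top P _)]
          exact ENNReal.ofReal_le_ofReal hup
        · rw [← ENNReal.ofReal_toReal (measure_ne_top P _)]
          exact ENNReal.ofReal_le_ofReal hlowraw
    _ = ENNReal.ofReal (2 * exp (-(2 * t₀ ^ 2 / ∑ i, w i ^ 2))) := by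
        rw [← ENNReal.ofReal_add (exp_pos _).le (exp_pos _).le]
        ring_nf

lemma card_filter_lt_fin (T m : ℕ) (h : m ≤ T) :
    (Finset.univ.filter fun i : Fin T => (i:ℕ) < m).card = m := by
  have : (Finset.univ.filter fun i : Fin T => (i:ℕ) < m) =
      (Finset.range m).attachFin (fun x hx => lt_of_lt_of_le (Finset.mem_range.mp hx) h) := by
    ext i
    simp [Finset.mem_attachFin]
  rw [this, Finset.card_attachFin, Finset.card_range]

end AuxForc

set_option maxHeartbeats 2000000 in

/-- Uniform concentration of cross-learned empirical means (Claim 1, FORC): with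
probability at least `1 − δ³/(8n³T)`, simultaneously for all feedback-count pairs
`(η₁, η₂)` with `η₁ + η₂ > 0`, the cross-learned empirical mean `x̂(η₁,η₂)` is within
`√((3/2)·log(4nT/δ)/η̂)` of `μ`, where `η̂ = η₁ + η₂/2^ℓ`. -/
theorem cross_learned_uniform_concentration
    {Ω : Type*} [MeasurableSpace Ω] (P : Measure Ω) [IsProbabilityMeasure P]
    (n T : ℕ) (hn : 1 ≤ n) (hT : 1 ≤ T)
    (δ : ℝ) (hδ0 : 0 < δ) (hδ1 : δ ≤ 1)
    (ℓ : ℕ) (hℓ : 1 ≤ ℓ)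
    (μ : ℝ) (hμ0 : 0 ≤ μ) (hμ1 : μ ≤ 1)
    (X Y : Fin T → Ω → ℝ)
    (hXmeas : ∀ i, Measurable (X i)) (hYmeas : ∀ i, Measurable (Y i))
    (hX01 : ∀ i ω, X i ω = 0 ∨ X i ω = 1) (hY01 : ∀ i ω, Y i ω = 0 ∨ Y i ω = 1)
    (hXmean : ∀ i, ∫ ω, X i ω ∂P = μ) (hYmean : ∀ i, ∫ ω, Y i ω ∂P = μ)
    (hindep : iIndepFun (Sum.elim X Y) P) :
    P {ω | ∃ η₁ ∈ Finset.range (T + 1), ∃ η₂ ∈ Finset.range (T + 1),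
        0 < η₁ + η₂ ∧
        Real.sqrt ((3 / 2) * Real.log (4 * n * T / δ) / ((η₁ : ℝ) + (η₂ : ℝ) / 2 ^ ℓ)) <
          |((η₁ : ℝ) + (η₂ : ℝ) / 2 ^ ℓ)⁻¹ *
              ((∑ i ∈ Finset.univ.filter (fun i : Fin T => (i : ℕ) < η₁), X i ω) +
                (2 : ℝ)⁻¹ ^ ℓ *
                  ∑ i ∈ Finset.univ.filter (fun i : Fin T => (i : ℕ) < η₂), Y i ω)
            - μ|}
      ≤ ENNReal.ofReal (δ ^ 3 / (8 * n ^ 3 * T)) := by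
  
  classical
  have hn1 : (1:ℝ) ≤ (n:ℝ) := by exact_mod_cast hn
  have hT1 : (1:ℝ) ≤ (T:ℝ) := by exact_mod_cast hT
  set L : ℝ := Real.log (4 * n * T / δ) with hLdef
  have hratio : (1:ℝ) < 4 * n * T / δ := by
    rw [lt_div_iff₀ hδ0]
    nlinarith
  have hratio0 : (0:ℝ) < 4 * n * T / δ := lt_trans one_pos hratio
  have hL : 0 < L := Real.log_pos hratio
  set B : ℝ≥0∞ := ENNReal.ofReal (2 * exp (-(3 * L))) with hBdef
  set E : ℕ → ℕ → Set Ω := fun η₁ η₂ => {ω | 0 < η₁ + η₂ ∧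
        Real.sqrt ((3 / 2) * L / ((η₁ : ℝ) + (η₂ : ℝ) / 2 ^ ℓ)) <
          |((η₁ : ℝ) + (η₂ : ℝ) / 2 ^ ℓ)⁻¹ *
              ((∑ i ∈ Finset.univ.filter (fun i : Fin T => (i : ℕ) < η₁), X i ω) +
                (2 : ℝ)⁻¹ ^ ℓ *
                  ∑ i ∈ Finset.univ.filter (fun i : Fin T => (i : ℕ) < η₂), Y i ω)
            - μ|} with hEdef
  -- measurability etc. for the Sum.elim family
  have hZmeas : ∀ i : Fin T ⊕ Fin T, Measurable (Sum.elim X Y i) := by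
    rintro (i | i)
    · exact hXmeas i
    · exact hYmeas i
  have hZ01 : ∀ (i : Fin T ⊕ Fin T) ω, Sum.elim X Y i ω = 0 ∨ Sum.elim X Y i ω = 1 := by
    rintro (i | i) ω
    · exact hX01 i ω
    · exact hY01 i ω
  have hZmean : ∀ i : Fin T ⊕ Fin T, ∫ ω, Sum.elim X Y i ω ∂P = μ := by
    rintro (i | i)
    · exact hXmean i
    · exact hYmean i
  -- per-pair bound
  have PE : ∀ η₁ ∈ Finset.range (T + 1), ∀ η₂ ∈ Finset.range (T + 1), P (E η₁ η₂) ≤ B := by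
    intro η₁ hη₁ η₂ hη₂
    rw [Finset.mem_range, Nat.lt_succ_iff] at hη₁ hη₂
    rcases Nat.eq_zero_or_pos (η₁ + η₂) with hzero | hpos
    · have hE : E η₁ η₂ = ∅ := Set.eq_empty_iff_forall_notMem.mpr (fun ω hω => by
        obtain ⟨hpos', -⟩ := hω
        omega)
      rw [hE]
      simp
    -- notation
    set ηh : ℝ := (η₁ : ℝ) + (η₂ : ℝ) / 2 ^ ℓ with hηh
    have h2l : (0:ℝ) < (2:ℝ)⁻¹ ^ ℓ := by positivity
    have h2l1 : (2:ℝ)⁻¹ ^ ℓ ≤ 1 := pow_le_one₀ (by norm_num) (by norm_num)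
    have hηhpos : 0 < ηh := by
      rcases (by omega : 0 < η₁ ∨ 0 < η₂) with h | h
      · have : (1:ℝ) ≤ (η₁:ℝ) := by exact_mod_cast h
        have : (0:ℝ) ≤ (η₂:ℝ) / 2 ^ ℓ := by positivity
        simp only [hηh]; linarith
      · have h1 : (1:ℝ) ≤ (η₂:ℝ) := by exact_mod_cast h
        have h2 : (0:ℝ) < (η₂:ℝ) / 2 ^ ℓ := by positivity
        have : (0:ℝ) ≤ (η₁:ℝ) := by positivity
        simp only [hηh]; linarith
    set w : Fin T ⊕ Fin T → ℝ := Sum.elim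
      (fun i : Fin T => if (i:ℕ) < η₁ then (1:ℝ) else 0)
      (fun i : Fin T => if (i:ℕ) < η₂ then (2:ℝ)⁻¹ ^ ℓ else 0) with hwdef
    have hw : ∀ i, 0 ≤ w i := by
      rintro (i | i) <;> simp only [hwdef, Sum.elim_inl, Sum.elim_inr] <;> split_ifs <;> positivity
    -- sum of weights
    have hcard1 : (Finset.univ.filter fun i : Fin T => (i:ℕ) < η₁).card = η₁ :=
      card_filter_lt_fin T η₁ hη₁
    have hcard2 : (Finset.univ.filter fun i : Fin T => (i:ℕ) < η₂).card = η₂ :=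
      card_filter_lt_fin T η₂ hη₂
    have hW : (∑ i, w i) = ηh := by
      rw [Fintype.sum_sum_type]
      simp only [hwdef, Sum.elim_inl, Sum.elim_inr]
      have e1 : (∑ i : Fin T, if (i:ℕ) < η₁ then (1:ℝ) else 0) = (η₁ : ℝ) := by
        rw [Finset.sum_boole]
        exact_mod_cast congrArg (Nat.cast : ℕ → ℝ) hcard1
      have e2 : (∑ i : Fin T, if (i:ℕ) < η₂ then (2:ℝ)⁻¹ ^ ℓ else 0)
          = (η₂ : ℝ) * (2:ℝ)⁻¹ ^ ℓ := by
        rw [← Finset.sum_filter, Finset.sum_const, hcard2, nsmul_eq_mul]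
      rw [e1, e2, hηh, div_eq_mul_inv, inv_pow]
    have hW2 : (∑ i, w i ^ 2) = (η₁ : ℝ) + (η₂ : ℝ) * ((2:ℝ)⁻¹ ^ ℓ) ^ 2 := by
      rw [Fintype.sum_sum_type]
      simp only [hwdef, Sum.elim_inl, Sum.elim_inr]
      have e1 : (∑ i : Fin T, (if (i:ℕ) < η₁ then (1:ℝ) else 0) ^ 2) = (η₁ : ℝ) := by
        have : ∀ i : Fin T, (if (i:ℕ) < η₁ then (1:ℝ) else 0) ^ 2
            = if (i:ℕ) < η₁ then (1:ℝ) else 0 := by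
          intro i; split_ifs <;> norm_num
        simp_rw [this]
        rw [Finset.sum_boole]
        exact_mod_cast congrArg (Nat.cast : ℕ → ℝ) hcard1
      have e2 : (∑ i : Fin T, (if (i:ℕ) < η₂ then (2:ℝ)⁻¹ ^ ℓ else 0) ^ 2)
          = (η₂ : ℝ) * ((2:ℝ)⁻¹ ^ ℓ) ^ 2 := by
        have : ∀ i : Fin T, (if (i:ℕ) < η₂ then (2:ℝ)⁻¹ ^ ℓ else 0) ^ 2
            = if (i:ℕ) < η₂ then ((2:ℝ)⁻¹ ^ ℓ) ^ 2 else 0 := by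
          intro i; split_ifs <;> norm_num
        simp_rw [this]
        rw [← Finset.sum_filter, Finset.sum_const, hcard2, nsmul_eq_mul]
      rw [e1, e2]
    have hW2pos : 0 < ∑ i, w i ^ 2 := by
      rw [hW2]
      rcases (by omega : 0 < η₁ ∨ 0 < η₂) with h | h
      · have : (1:ℝ) ≤ (η₁:ℝ) := by exact_mod_cast h
        have h2 : (0:ℝ) ≤ (η₂:ℝ) * ((2:ℝ)⁻¹ ^ ℓ) ^ 2 := by positivity
        linarith
      · have h1 : (1:ℝ) ≤ (η₂:ℝ) := by exact_mod_cast h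
        have h2 : (0:ℝ) < (η₂:ℝ) * ((2:ℝ)⁻¹ ^ ℓ) ^ 2 := by positivity
        have : (0:ℝ) ≤ (η₁:ℝ) := by positivity
        linarith
    have hW2le : (∑ i, w i ^ 2) ≤ ηh := by
      have h22 : ((2:ℝ)⁻¹ ^ ℓ) ^ 2 ≤ (2:ℝ)⁻¹ ^ ℓ := by nlinarith
      have hη2 : (0:ℝ) ≤ (η₂:ℝ) := by positivity
      have hdiv : (η₂:ℝ) / 2 ^ ℓ = (η₂:ℝ) * (2:ℝ)⁻¹ ^ ℓ := by
        rw [div_eq_mul_inv, inv_pow]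
      rw [hW2, hηh, hdiv]
      nlinarith
    -- sum identity
    have hsum : ∀ ω, (∑ i, w i * Sum.elim X Y i ω)
        = (∑ i ∈ Finset.univ.filter (fun i : Fin T => (i : ℕ) < η₁), X i ω)
          + (2 : ℝ)⁻¹ ^ ℓ * ∑ i ∈ Finset.univ.filter (fun i : Fin T => (i : ℕ) < η₂), Y i ω := by
      intro ω
      rw [Fintype.sum_sum_type]
      congr 1
      · rw [Finset.sum_filter]
        apply Finset.sum_congr rfl
        intro i _
        simp only [hwdef, Sum.elim_inl]
        split_ifs <;> simp
      · rw [Finset.mul_sum, Finset.sum_filter]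
        apply Finset.sum_congr rfl
        intro i _
        simp only [hwdef, Sum.elim_inr]
        split_ifs <;> simp
    -- epsilon and t0
    have hargpos : 0 < (3/2) * L / ηh := by positivity
    set ε : ℝ := Real.sqrt ((3/2) * L / ηh) with hεdef
    have hεpos : 0 < ε := Real.sqrt_pos.mpr hargpos
    have hε2 : ε ^ 2 = (3/2) * L / ηh := Real.sq_sqrt hargpos.le
    have ht₀pos : 0 < ηh * ε := mul_pos hηhpos hεpos
    clear_value w ηh ε
    -- event inclusion
    have hincl : E η₁ η₂ ⊆ {ω | ηh * ε ≤ |(∑ i, w i * Sum.elim X Y i ω) - (∑ i, w i) * μ|} := by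
      intro ω hω
      obtain ⟨-, hineq⟩ := hω
      simp only [Set.mem_setOf_eq]
      rw [hsum ω, hW]
      set S := (∑ i ∈ Finset.univ.filter (fun i : Fin T => (i : ℕ) < η₁), X i ω)
          + (2 : ℝ)⁻¹ ^ ℓ * ∑ i ∈ Finset.univ.filter (fun i : Fin T => (i : ℕ) < η₂), Y i ω with hS
      clear_value S
      have heq : ηh⁻¹ * S - μ = (S - ηh * μ) / ηh := by
        field_simp
      rw [← hηh] at hineq
      rw [heq, abs_div, abs_of_pos hηhpos] at hineq
      have h2 := ((lt_div_iff₀ hηhpos).mp hineq).le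
      rw [← hεdef] at h2
      calc ηh * ε = ε * ηh := mul_comm _ _
        _ ≤ |S - ηh * μ| := h2
    -- apply tail bound
    have htail := weighted_tail_two P (Sum.elim X Y) hindep hZmeas hZ01 hμ0 hμ1 hZmean
      w hw ht₀pos hW2pos
    have hexp_le : 2 * exp (-(2 * (ηh * ε) ^ 2 / ∑ i, w i ^ 2)) ≤ 2 * exp (-(3 * L)) := by
      have ht2 : 2 * (ηh * ε) ^ 2 = 3 * L * ηh := by
        have h1 : (ηh * ε) ^ 2 = ηh ^ 2 * ε ^ 2 := by ring
        have hne : ηh ≠ 0 := ne_of_gt hηhpos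
        rw [h1, hε2]
        field_simp
      have h3L : 3 * L ≤ 2 * (ηh * ε) ^ 2 / ∑ i, w i ^ 2 := by
        rw [le_div_iff₀ hW2pos, ht2]
        have := mul_le_mul_of_nonneg_left hW2le (by positivity : (0:ℝ) ≤ 3 * L)
        linarith
      have : exp (-(2 * (ηh * ε) ^ 2 / ∑ i, w i ^ 2)) ≤ exp (-(3 * L)) :=
        Real.exp_le_exp.mpr (by linarith)
      linarith
    calc P (E η₁ η₂) ≤ P {ω | ηh * ε ≤ |(∑ i, w i * Sum.elim X Y i ω) - (∑ i, w i) * μ|} :=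
        measure_mono hincl
      _ ≤ ENNReal.ofReal (2 * exp (-(2 * (ηh * ε) ^ 2 / ∑ i, w i ^ 2))) := htail
      _ ≤ B := ENNReal.ofReal_le_ofReal hexp_le
  -- union bound
  have hsubset : {ω | ∃ η₁ ∈ Finset.range (T + 1), ∃ η₂ ∈ Finset.range (T + 1),
        0 < η₁ + η₂ ∧
        Real.sqrt ((3 / 2) * Real.log (4 * n * T / δ) / ((η₁ : ℝ) + (η₂ : ℝ) / 2 ^ ℓ)) <
          |((η₁ : ℝ) + (η₂ : ℝ) / 2 ^ ℓ)⁻¹ *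
              ((∑ i ∈ Finset.univ.filter (fun i : Fin T => (i : ℕ) < η₁), X i ω) +
                (2 : ℝ)⁻¹ ^ ℓ *
                  ∑ i ∈ Finset.univ.filter (fun i : Fin T => (i : ℕ) < η₂), Y i ω)
            - μ|}
      ⊆ ⋃ η₁ ∈ Finset.range (T + 1), ⋃ η₂ ∈ Finset.range (T + 1), E η₁ η₂ := by
    intro ω hω
    obtain ⟨η₁, h1, η₂, h2, hc⟩ := hω
    exact Set.mem_biUnion h1 (Set.mem_biUnion h2 hc)
  refine le_trans (measure_mono hsubset) ?_
  calc P (⋃ η₁ ∈ Finset.range (T + 1), ⋃ η₂ ∈ Finset.range (T + 1), E η₁ η₂)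
      ≤ ∑ η₁ ∈ Finset.range (T + 1), P (⋃ η₂ ∈ Finset.range (T + 1), E η₁ η₂) :=
      measure_biUnion_finset_le _ _
    _ ≤ ∑ η₁ ∈ Finset.range (T + 1), ∑ η₂ ∈ Finset.range (T + 1), P (E η₁ η₂) :=
      Finset.sum_le_sum (fun η₁ _ => measure_biUnion_finset_le _ _)
    _ ≤ ∑ η₁ ∈ Finset.range (T + 1), ∑ η₂ ∈ Finset.range (T + 1), B :=
      Finset.sum_le_sum (fun η₁ h1 => Finset.sum_le_sum (fun η₂ h2 => PE η₁ h1 η₂ h2))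
    _ = ((T+1) : ℝ≥0∞) * (((T+1) : ℝ≥0∞) * B) := by
      simp [Finset.sum_const, Finset.card_range, nsmul_eq_mul, mul_assoc]
    _ ≤ ENNReal.ofReal (δ ^ 3 / (8 * n ^ 3 * T)) := by
      have hcast : ENNReal.ofReal ((T:ℝ)+1) = ((T : ℝ≥0∞)+1) := by
        rw [ENNReal.ofReal_add (by positivity) zero_le_one, ENNReal.ofReal_natCast,
          ENNReal.ofReal_one]
      have hBval : ((T+1) : ℝ≥0∞) * (((T+1) : ℝ≥0∞) * B)
          = ENNReal.ofReal (((T:ℝ)+1) * (((T:ℝ)+1) * (2 * exp (-(3 * L))))) := by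
        rw [hBdef, ← hcast, ← ENNReal.ofReal_mul (by positivity),
          ← ENNReal.ofReal_mul (by positivity)]
      rw [hBval]
      apply ENNReal.ofReal_le_ofReal
      -- real arithmetic
      have hexp3 : exp (-(3 * L)) = (δ / (4 * n * T)) ^ 3 := by
        rw [hLdef, show -(3 * Real.log (4 * n * T / δ)) = (3:ℕ) * (-Real.log (4 * n * T / δ)) by
          push_cast; ring, Real.exp_nat_mul, Real.exp_neg, Real.exp_log hratio0]
        rw [inv_div]
      rw [hexp3]
      have hNT : (0:ℝ) < 4 * n * T := by nlinarith
      rw [div_pow]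
      have hden : ((4:ℝ) * n * T) ^ 3 = 64 * (n:ℝ)^3 * (T:ℝ)^3 := by ring
      rw [hden]
      have hrw : ((T:ℝ)+1) * (((T:ℝ)+1) * (2 * (δ^3 / (64 * (n:ℝ)^3 * (T:ℝ)^3))))
          = (((T:ℝ)+1) * (((T:ℝ)+1) * (2 * δ^3))) / (64 * (n:ℝ)^3 * (T:ℝ)^3) := by
        ring
      rw [hrw, div_le_div_iff₀ (by positivity) (by positivity)]
      have hsq : ((T:ℝ)+1)^2 ≤ 4 * (T:ℝ)^2 := by nlinarith
      have hu : (0:ℝ) ≤ δ^3 := by positivity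
      have hkey := mul_le_mul_of_nonneg_left hsq
        (by positivity : (0:ℝ) ≤ δ^3 * ((n:ℝ)^3 * (T:ℝ)))
      nlinarith [hkey]
end

section
/- Let (Ω, 𝓕, P) be a probability space with a filtration (𝒢_t)_{t=0}^{T}, let L ≥ 2 be an integer and F ≥ 1 an integer, and let δ ∈ (0,1). For each t ∈ {1,…,T}, let ℓ_t be an ℕ-valued 𝒢_t-measurable random variable that is independent of 𝒢_{t−1}, with P(ℓ_t = ℓ) = 2^{-ℓ} for each ℓ ∈ {2,…,L} and P(ℓ_t = 1) = 1 − Σ_{ℓ=2}^{L} 2^{-ℓ}; and let f_t be a {0,1}-valued 𝒢_{t−1}-measurable random variable with Σ_{t=1}^{T} f_t ≤ F almost surely. Then with probability at least 1 − δ/2, simultaneously for every level ℓ ∈ {2,…,L} with 2^ℓ ≥ F: Σ_{t=1}^{T} f_t·𝟙(ℓ_t = ℓ) ≤ log(2L/δ) + 3. -/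
open MeasureTheory ProbabilityTheory


section ForcAux
variable {Ω : Type*} {m0 : MeasurableSpace Ω}

/-- bounded measurable functions are integrable on a probability space -/
lemma forc_integrable (P : Measure Ω) [IsProbabilityMeasure P] {h : Ω → ℝ} {C : ℝ}
    (hm : Measurable h) (hb : ∀ ω, |h ω| ≤ C) : Integrable h P :=
  Integrable.mono' (integrable_const C) hm.aestronglyMeasurable
    (Filter.Eventually.of_forall (fun ω => by simpa using hb ω))

lemma forc_mgf_bound (P : Measure Ω) [IsProbabilityMeasure P]
    (T : ℕ) (𝒢 : Filtration ℕ m0)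
    (f : ℕ → Ω → ℝ) (ℓfun : ℕ → Ω → ℕ) (ℓ : ℕ) (p : ℝ) (hp0 : 0 ≤ p)
    (hf01 : ∀ t ∈ Finset.Icc 1 T, ∀ ω, f t ω = 0 ∨ f t ω = 1)
    (hfmeas : ∀ t ∈ Finset.Icc 1 T, Measurable[𝒢 (t - 1)] (f t))
    (hℓmeas : ∀ t ∈ Finset.Icc 1 T, Measurable[𝒢 t] (ℓfun t))
    (hℓindep : ∀ t ∈ Finset.Icc 1 T,
      Indep (MeasurableSpace.comap (ℓfun t) inferInstance) (𝒢 (t - 1)) P)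
    (hℓp : ∀ t ∈ Finset.Icc 1 T, (P {ω | ℓfun t ω = ℓ}).toReal = p)
    (F : ℕ) (hfbudget : ∀ᵐ ω ∂P, ∑ t ∈ Finset.Icc 1 T, f t ω ≤ (F : ℝ))
    (hpF : p * F ≤ 1) :
    ∫ ω, Real.exp (∑ t ∈ Finset.Icc 1 T,
        f t ω * (if ℓfun t ω = ℓ then (1:ℝ) else 0)) ∂P
      ≤ Real.exp (Real.exp 1 - 1) := by
  set c : ℝ := Real.exp 1 - 1 with hc_def
  have hc0 : 0 ≤ c := by
    have := Real.add_one_le_exp (1 : ℝ); simp only [hc_def]; linarith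
  set ind : ℕ → Ω → ℝ := fun t ω => if ℓfun t ω = ℓ then (1:ℝ) else 0 with hind_def
  set φ : ℕ → Ω → ℝ := fun t ω =>
      (1 + c * (f t ω * ind t ω)) * Real.exp (-(c * p) * f t ω) with hφ_def
  set M : ℕ → Ω → ℝ := fun n ω => ∏ t ∈ Finset.Icc 1 n, φ t ω with hM_def
  -- basic facts about factors
  have hf0 : ∀ t ∈ Finset.Icc 1 T, ∀ ω, 0 ≤ f t ω := by
    intro t ht ω; rcases hf01 t ht ω with h | h <;> simp [h]
  have hf1 : ∀ t ∈ Finset.Icc 1 T, ∀ ω, f t ω ≤ 1 := by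
    intro t ht ω; rcases hf01 t ht ω with h | h <;> simp [h]
  have hind0 : ∀ t ω, 0 ≤ ind t ω := by intro t ω; simp only [hind_def]; positivity
  have hind1 : ∀ t ω, ind t ω ≤ 1 := by
    intro t ω; simp only [hind_def]; split <;> norm_num
  have hφ0 : ∀ t ∈ Finset.Icc 1 T, ∀ ω, 0 ≤ φ t ω := by
    intro t ht ω
    have h1 := hf0 t ht ω; have h2 := hind0 t ω
    have : (0:ℝ) ≤ 1 + c * (f t ω * ind t ω) := by positivity
    exact mul_nonneg this (Real.exp_pos _).le
  have hφle : ∀ t ∈ Finset.Icc 1 T, ∀ ω, φ t ω ≤ Real.exp 1 := by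
    intro t ht ω
    have h1 : f t ω * ind t ω ≤ 1 :=
      mul_le_one₀ (hf1 t ht ω) (hind0 t ω) (hind1 t ω)
    have h2 : 1 + c * (f t ω * ind t ω) ≤ Real.exp 1 := by
      have : c * (f t ω * ind t ω) ≤ c * 1 := by
        apply mul_le_mul_of_nonneg_left h1 hc0
      simp only [hc_def] at this ⊢; linarith
    have h3 : Real.exp (-(c * p) * f t ω) ≤ 1 := by
      apply Real.exp_le_one_iff.mpr
      have := hf0 t ht ω
      have : 0 ≤ (c * p) * f t ω := by positivity
      linarith
    calc φ t ω ≤ (1 + c * (f t ω * ind t ω)) * 1 := by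
          apply mul_le_mul_of_nonneg_left h3
          have h1' := hf0 t ht ω; have h2' := hind0 t ω; positivity
      _ ≤ Real.exp 1 := by simpa using h2
  -- measurability
  have hindmeas : ∀ t ∈ Finset.Icc 1 T, Measurable[𝒢 t] (ind t) := by
    intro t ht
    have hs : MeasurableSet[𝒢 t] {ω | ℓfun t ω = ℓ} :=
      hℓmeas t ht (measurableSet_singleton ℓ)
    exact Measurable.ite hs measurable_const measurable_const
  have hφmeas : ∀ t ∈ Finset.Icc 1 T, Measurable[𝒢 t] (φ t) := by
    intro t ht
    have hf' : Measurable[𝒢 t] (f t) := (hfmeas t ht).mono (𝒢.mono (Nat.sub_le t 1)) le_rfl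
    exact ((measurable_const.add (((hf'.mul (hindmeas t ht)).const_mul c))).mul
      (((hf'.const_mul (-(c*p)))).exp))
  have hMmeas : ∀ n, n ≤ T → Measurable[𝒢 n] (M n) := by
    intro n hn
    apply Finset.measurable_prod
    intro t ht
    have ht' : t ∈ Finset.Icc 1 T := by
      simp only [Finset.mem_Icc] at ht ⊢; omega
    have htn : t ≤ n := by simp only [Finset.mem_Icc] at ht; omega
    exact (hφmeas t ht').mono (𝒢.mono htn) le_rfl
  have hM0 : ∀ n, n ≤ T → ∀ ω, 0 ≤ M n ω := by
    intro n hn ω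
    apply Finset.prod_nonneg
    intro t ht
    have ht' : t ∈ Finset.Icc 1 T := by simp only [Finset.mem_Icc] at ht ⊢; omega
    exact hφ0 t ht' ω
  have hMle : ∀ n, n ≤ T → ∀ ω, M n ω ≤ Real.exp 1 ^ n := by
    intro n hn ω
    calc M n ω ≤ ∏ t ∈ Finset.Icc 1 n, Real.exp 1 := by
          apply Finset.prod_le_prod
          · intro t ht
            have ht' : t ∈ Finset.Icc 1 T := by simp only [Finset.mem_Icc] at ht ⊢; omega
            exact hφ0 t ht' ω
          · intro t ht
            have ht' : t ∈ Finset.Icc 1 T := by simp only [Finset.mem_Icc] at ht ⊢; omega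
            exact hφle t ht' ω
      _ = Real.exp 1 ^ n := by rw [Finset.prod_const, Nat.card_Icc]; norm_num
  have hMint : ∀ n, n ≤ T → Integrable (M n) P := by
    intro n hn
    apply forc_integrable P ((hMmeas n hn).mono (𝒢.le n) le_rfl) (C := Real.exp 1 ^ n)
    intro ω
    rw [abs_of_nonneg (hM0 n hn ω)]
    exact hMle n hn ω
  -- the induction
  have hMT : ∫ ω, M T ω ∂P ≤ 1 := by
    suffices h : ∀ n, n ≤ T → ∫ ω, M n ω ∂P ≤ 1 by exact h T le_rfl
    intro n
    induction n with
    | zero => intro _; simp [hM_def]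
    | succ k ih =>
      intro hn
      have hk : k ≤ T := by omega
      have htm : k + 1 ∈ Finset.Icc 1 T := Finset.mem_Icc.mpr ⟨by omega, hn⟩
      -- split product
      have hsplit : ∀ ω, M (k+1) ω = M k ω * φ (k+1) ω := by
        intro ω
        simp only [hM_def]
        exact Finset.prod_Icc_succ_top (by omega) _
      -- expand the factor
      set e : Ω → ℝ := fun ω => Real.exp (-(c * p) * f (k+1) ω) with he_def
      set d : ℝ := c * Real.exp (-(c * p)) with hd_def
      have hexpand : ∀ ω, φ (k+1) ω = e ω + d * (f (k+1) ω * ind (k+1) ω) := by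
        intro ω
        rcases hf01 (k+1) htm ω with h | h <;>
          simp only [hφ_def, he_def, hd_def, h, mul_zero, zero_mul, mul_one, neg_zero,
            Real.exp_zero] <;> ring
      have he0 : ∀ ω, 0 ≤ e ω := fun ω => (Real.exp_pos _).le
      have he1 : ∀ ω, e ω ≤ 1 := by
        intro ω
        apply Real.exp_le_one_iff.mpr
        have h1 := hf0 (k+1) htm ω
        have : 0 ≤ (c * p) * f (k+1) ω := by positivity
        linarith
      have hfm0 : Measurable (f (k+1)) := (hfmeas (k+1) htm).mono (𝒢.le _) le_rfl
      have hindm0 : Measurable (ind (k+1)) := (hindmeas (k+1) htm).mono (𝒢.le _) le_rfl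
      have hMm0 : Measurable (M k) := (hMmeas k hk).mono (𝒢.le _) le_rfl
      have hem0 : Measurable e := (hfm0.const_mul (-(c*p))).exp
      -- integrability pieces
      have habs : ∀ ω, |M k ω| ≤ Real.exp 1 ^ k := by
        intro ω; rw [abs_of_nonneg (hM0 k hk ω)]; exact hMle k hk ω
      have hint1 : Integrable (fun ω => M k ω * e ω) P := by
        apply forc_integrable P (hMm0.mul hem0) (C := Real.exp 1 ^ k)
        intro ω
        rw [Pi.mul_apply, abs_mul]
        calc |M k ω| * |e ω| ≤ Real.exp 1 ^ k * 1 := by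
              apply mul_le_mul (habs ω) ?_ (abs_nonneg _) (by positivity)
              rw [abs_of_nonneg (he0 ω)]; exact he1 ω
          _ = Real.exp 1 ^ k := by ring
      have hint2 : Integrable (fun ω => M k ω * f (k+1) ω) P := by
        apply forc_integrable P (hMm0.mul hfm0) (C := Real.exp 1 ^ k)
        intro ω
        rw [Pi.mul_apply, abs_mul]
        calc |M k ω| * |f (k+1) ω| ≤ Real.exp 1 ^ k * 1 := by
              apply mul_le_mul (habs ω) ?_ (abs_nonneg _) (by positivity)
              rw [abs_of_nonneg (hf0 (k+1) htm ω)]; exact hf1 (k+1) htm ω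
          _ = Real.exp 1 ^ k := by ring
      have hintind : Integrable (ind (k+1)) P := by
        apply forc_integrable P hindm0 (C := 1)
        intro ω
        rw [abs_of_nonneg (hind0 (k+1) ω)]; exact hind1 (k+1) ω
      have hint3 : Integrable (fun ω => (M k ω * f (k+1) ω) * ind (k+1) ω) P := by
        apply forc_integrable P ((hMm0.mul hfm0).mul hindm0) (C := Real.exp 1 ^ k)
        intro ω
        rw [Pi.mul_apply, Pi.mul_apply, abs_mul]
        calc |M k ω * f (k+1) ω| * |ind (k+1) ω| ≤ Real.exp 1 ^ k * 1 := by
              apply mul_le_mul ?_ ?_ (abs_nonneg _) (by positivity)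
              · rw [abs_mul]
                calc |M k ω| * |f (k+1) ω| ≤ Real.exp 1 ^ k * 1 := by
                      apply mul_le_mul (habs ω) ?_ (abs_nonneg _) (by positivity)
                      rw [abs_of_nonneg (hf0 (k+1) htm ω)]; exact hf1 (k+1) htm ω
                  _ = Real.exp 1 ^ k := by ring
              · rw [abs_of_nonneg (hind0 (k+1) ω)]; exact hind1 (k+1) ω
          _ = Real.exp 1 ^ k := by ring
      -- independence
      have hindep : IndepFun (fun ω => M k ω * f (k+1) ω) (ind (k+1)) P := by
        rw [indepFun_iff_measure_inter_preimage_eq_mul]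
        intro s t hs ht
        have hXs : MeasurableSet[𝒢 k] ((fun ω => M k ω * f (k+1) ω) ⁻¹' s) := by
          have hfk : Measurable[𝒢 k] (f (k+1)) := by
            have := hfmeas (k+1) htm
            simpa using this
          exact ((hMmeas k hk).mul hfk) hs
        have hYt : MeasurableSet[MeasurableSpace.comap (ℓfun (k+1)) inferInstance]
            (ind (k+1) ⁻¹' t) := by
          refine ⟨(fun x : ℕ => if x = ℓ then (1:ℝ) else 0) ⁻¹' t, trivial, ?_⟩
          rfl
        have hI := (Indep_iff _ _ _).mp (hℓindep (k+1) htm) _ _ hYt (by simpa using hXs)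
        rw [Set.inter_comm] at hI
        rw [hI, mul_comm]
      have hindset : MeasurableSet {ω | ℓfun (k+1) ω = ℓ} :=
        ((hℓmeas (k+1) htm).mono (𝒢.le _) le_rfl) (measurableSet_singleton ℓ)
      have hindint : ∫ ω, ind (k+1) ω ∂P = p := by
        have heq : (fun ω => ind (k+1) ω)
            = fun ω => Set.indicator {ω | ℓfun (k+1) ω = ℓ} (fun _ => (1:ℝ)) ω := by
          funext ω
          simp only [hind_def, Set.indicator]
          split <;> simp_all
        calc ∫ ω, ind (k+1) ω ∂P
            = ∫ ω, Set.indicator {ω | ℓfun (k+1) ω = ℓ} (fun _ => (1:ℝ)) ω ∂P := by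
              rw [heq]
          _ = (P {ω | ℓfun (k+1) ω = ℓ}).toReal • (1:ℝ) := integral_indicator_const _ hindset
          _ = p := by rw [hℓp (k+1) htm]; simp
      have hkey : ∫ ω, (M k ω * f (k+1) ω) * ind (k+1) ω ∂P
          = (∫ ω, M k ω * f (k+1) ω ∂P) * p := by
        rw [← hindint]
        exact IndepFun.integral_fun_mul_eq_mul_integral hindep hint2.aestronglyMeasurable hintind.aestronglyMeasurable
      -- put together
      have hstep : ∫ ω, M (k+1) ω ∂P = ∫ ω, M k ω * (e ω + (d * p) * f (k+1) ω) ∂P := by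
        calc ∫ ω, M (k+1) ω ∂P
            = ∫ ω, (M k ω * e ω + d * ((M k ω * f (k+1) ω) * ind (k+1) ω)) ∂P := by
              apply integral_congr_ae
              apply Filter.Eventually.of_forall
              intro ω
              rw [hsplit ω, hexpand ω]; ring
          _ = ∫ ω, M k ω * e ω ∂P + d * ∫ ω, (M k ω * f (k+1) ω) * ind (k+1) ω ∂P := by
              rw [integral_add hint1 (hint3.const_mul d), integral_const_mul]
          _ = ∫ ω, M k ω * e ω ∂P + d * ((∫ ω, M k ω * f (k+1) ω ∂P) * p) := by rw [hkey]
          _ = ∫ ω, M k ω * e ω ∂P + (d * p) * ∫ ω, M k ω * f (k+1) ω ∂P := by ring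
          _ = ∫ ω, (M k ω * e ω + (d * p) * (M k ω * f (k+1) ω)) ∂P := by
              rw [integral_add hint1 (hint2.const_mul (d * p))]
              rw [integral_const_mul]
          _ = ∫ ω, M k ω * (e ω + (d * p) * f (k+1) ω) ∂P := by
              apply integral_congr_ae
              apply Filter.Eventually.of_forall
              intro ω; ring
      rw [hstep]
      have hptwise : ∀ ω, M k ω * (e ω + (d * p) * f (k+1) ω) ≤ M k ω := by
        intro ω
        have hM0' := hM0 k hk ω
        have hbound : e ω + (d * p) * f (k+1) ω ≤ 1 := by
          rcases hf01 (k+1) htm ω with h | h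
          · simp only [he_def, h, mul_zero, neg_zero, Real.exp_zero]; norm_num
          · have h1 : c * p + 1 ≤ Real.exp (c * p) := Real.add_one_le_exp _
            have h3 : (0:ℝ) < Real.exp (c * p) := Real.exp_pos _
            have key : (1 + c * p) / Real.exp (c * p) ≤ 1 :=
              (div_le_one h3).mpr (by linarith)
            have heq : e ω + (d * p) * f (k+1) ω
                = (1 + c * p) / Real.exp (c * p) := by
              simp only [he_def, hd_def, h, mul_one, Real.exp_neg, div_eq_mul_inv]
              ring
            rw [heq]; exact key
        nlinarith
      have hint4 : Integrable (fun ω => M k ω * (e ω + (d * p) * f (k+1) ω)) P := by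
        have : (fun ω => M k ω * (e ω + (d * p) * f (k+1) ω))
            = fun ω => M k ω * e ω + (d * p) * (M k ω * f (k+1) ω) := by
          funext ω; ring
        rw [this]
        exact hint1.add (hint2.const_mul _)
      calc ∫ ω, M k ω * (e ω + (d * p) * f (k+1) ω) ∂P ≤ ∫ ω, M k ω ∂P :=
            integral_mono hint4 (hMint k hk) hptwise
        _ ≤ 1 := ih hk

  -- pointwise identity and conclusion
  set S : Ω → ℝ := fun ω => ∑ t ∈ Finset.Icc 1 T, f t ω * ind t ω with hS_def
  have hpt : ∀ ω, Real.exp (S ω)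
      = M T ω * Real.exp ((c * p) * ∑ t ∈ Finset.Icc 1 T, f t ω) := by
    intro ω
    have h2 : Real.exp (S ω) = ∏ t ∈ Finset.Icc 1 T, (1 + c * (f t ω * ind t ω)) := by
      rw [hS_def, Real.exp_sum]
      apply Finset.prod_congr rfl
      intro t ht
      rcases hf01 t ht ω with h | h
      · simp [h]
      · simp only [hind_def, h, one_mul]
        split
        · rw [hc_def]; ring
        · simp
    have h1 : M T ω = (∏ t ∈ Finset.Icc 1 T, (1 + c * (f t ω * ind t ω))) *
        Real.exp (-(c * p) * ∑ t ∈ Finset.Icc 1 T, f t ω) := by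
      simp only [hM_def, hφ_def]
      rw [Finset.prod_mul_distrib]
      congr 1
      rw [← Real.exp_sum]
      congr 1
      exact (Finset.mul_sum _ _ _).symm
    have hz : -(c * p) * (∑ t ∈ Finset.Icc 1 T, f t ω)
        + (c * p) * (∑ t ∈ Finset.Icc 1 T, f t ω) = 0 := by ring
    rw [h2, h1, mul_assoc, ← Real.exp_add, hz, Real.exp_zero, mul_one]
  have hSmeas : Measurable S := by
    apply Finset.measurable_sum
    intro t ht
    exact ((hfmeas t ht).mono (𝒢.le _) le_rfl).mul
      ((hindmeas t ht).mono (𝒢.le _) le_rfl)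
  have hS0 : ∀ ω, 0 ≤ S ω := by
    intro ω
    apply Finset.sum_nonneg
    intro t ht
    exact mul_nonneg (hf0 t ht ω) (hind0 t ω)
  have hST : ∀ ω, S ω ≤ T := by
    intro ω
    calc S ω ≤ ∑ t ∈ Finset.Icc 1 T, (1:ℝ) := by
          apply Finset.sum_le_sum
          intro t ht
          exact mul_le_one₀ (hf1 t ht ω) (hind0 t ω) (hind1 t ω)
      _ = T := by rw [Finset.sum_const, Nat.card_Icc]; simp
  have hexpSint : Integrable (fun ω => Real.exp (S ω)) P := by
    apply forc_integrable P hSmeas.exp (C := Real.exp T)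
    intro ω
    rw [abs_of_nonneg (Real.exp_pos _).le]
    exact Real.exp_le_exp.mpr (hST ω)
  have hae : ∀ᵐ ω ∂P, Real.exp (S ω) ≤ M T ω * Real.exp c := by
    filter_upwards [hfbudget] with ω hω
    rw [hpt ω]
    apply mul_le_mul_of_nonneg_left ?_ (hM0 T le_rfl ω)
    apply Real.exp_le_exp.mpr
    have hsum0 : 0 ≤ ∑ t ∈ Finset.Icc 1 T, f t ω :=
      Finset.sum_nonneg fun t ht => hf0 t ht ω
    calc (c * p) * ∑ t ∈ Finset.Icc 1 T, f t ω ≤ (c * p) * F := by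
          apply mul_le_mul_of_nonneg_left hω (by positivity)
      _ = c * (p * F) := by ring
      _ ≤ c * 1 := by apply mul_le_mul_of_nonneg_left hpF hc0
      _ = c := mul_one c
  calc ∫ ω, Real.exp (S ω) ∂P ≤ ∫ ω, M T ω * Real.exp c ∂P := by
        apply integral_mono_ae hexpSint ((hMint T le_rfl).mul_const _) hae
    _ = (∫ ω, M T ω ∂P) * Real.exp c := integral_mul_const _ _
    _ ≤ 1 * Real.exp c := by
        apply mul_le_mul_of_nonneg_right hMT (Real.exp_pos _).le
    _ = Real.exp (Real.exp 1 - 1) := by rw [one_mul, hc_def]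

end ForcAux

/-- Effective fakeness budget for high learning levels (Lemma 5): with adaptive
fakeness indicators `f t` of total budget `F`, and learning levels `ℓfun t` sampled
independently of the past with `P(ℓ_t = ℓ) = 2^{-ℓ}` for `ℓ ∈ {2,…,L}` and the
remaining mass on level 1, with probability at least `1 − δ/2` every level
`ℓ ∈ {2,…,L}` with `2^ℓ ≥ F` is exposed to at most `log(2L/δ) + 3` fake users. -/
theorem effective_fakeness_budget_high_levels
    {Ω : Type*} {m0 : MeasurableSpace Ω} (P : Measure Ω) [IsProbabilityMeasure P]
    (T : ℕ) (𝒢 : Filtration ℕ m0)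
    (L : ℕ) (hL : 2 ≤ L) (F : ℕ) (hF : 1 ≤ F)
    (δ : ℝ) (hδ0 : 0 < δ) (hδ1 : δ < 1)
    (f : ℕ → Ω → ℝ) (ℓfun : ℕ → Ω → ℕ)
    (hf01 : ∀ t ∈ Finset.Icc 1 T, ∀ ω, f t ω = 0 ∨ f t ω = 1)
    (hfmeas : ∀ t ∈ Finset.Icc 1 T, Measurable[𝒢 (t - 1)] (f t))
    (hfbudget : ∀ᵐ ω ∂P, ∑ t ∈ Finset.Icc 1 T, f t ω ≤ (F : ℝ))
    (hℓmeas : ∀ t ∈ Finset.Icc 1 T, Measurable[𝒢 t] (ℓfun t))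
    (hℓindep : ∀ t ∈ Finset.Icc 1 T,
      Indep (MeasurableSpace.comap (ℓfun t) inferInstance) (𝒢 (t - 1)) P)
    (hℓdist : ∀ t ∈ Finset.Icc 1 T, ∀ ℓ ∈ Finset.Icc 2 L,
      (P {ω | ℓfun t ω = ℓ}).toReal = ((2 : ℝ) ^ ℓ)⁻¹)
    (hℓone : ∀ t ∈ Finset.Icc 1 T,
      (P {ω | ℓfun t ω = 1}).toReal = 1 - ∑ ℓ ∈ Finset.Icc 2 L, ((2 : ℝ) ^ ℓ)⁻¹) :
    ENNReal.ofReal (1 - δ / 2) ≤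
      P {ω | ∀ ℓ ∈ Finset.Icc 2 L, (F : ℝ) ≤ 2 ^ ℓ →
        ∑ t ∈ Finset.Icc 1 T, f t ω * (if ℓfun t ω = ℓ then (1 : ℝ) else 0)
          ≤ Real.log (2 * L / δ) + 3} := by
  set B : ℝ := Real.log (2 * L / δ) + 3 with hB_def
  set S : ℕ → Ω → ℝ := fun ℓ ω =>
    ∑ t ∈ Finset.Icc 1 T, f t ω * (if ℓfun t ω = ℓ then (1 : ℝ) else 0) with hS_def
  have hSmeas : ∀ ℓ, Measurable (S ℓ) := by
    intro ℓ
    apply Finset.measurable_sum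
    intro t ht
    have h1 : Measurable (f t) := (hfmeas t ht).mono (𝒢.le _) le_rfl
    have h2 : Measurable (ℓfun t) := (hℓmeas t ht).mono (𝒢.le _) le_rfl
    exact h1.mul (Measurable.ite (h2 (measurableSet_singleton ℓ))
      measurable_const measurable_const)
  have hLpos : (0:ℝ) < L := by positivity
  have hxpos : (0:ℝ) < 2 * L / δ := by positivity
  -- per-level tail bound
  have htail : ∀ ℓ ∈ Finset.Icc 2 L, (F:ℝ) ≤ 2 ^ ℓ →
      P {ω | B ≤ S ℓ ω} ≤ ENNReal.ofReal (δ / (2 * L)) := by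
    intro ℓ hℓ hFle
    set p : ℝ := ((2:ℝ) ^ ℓ)⁻¹ with hp_def
    have hp0 : 0 ≤ p := by positivity
    have hpF : p * F ≤ 1 := by
      have h2pos : (0:ℝ) < 2 ^ ℓ := by positivity
      rw [hp_def]
      calc ((2:ℝ) ^ ℓ)⁻¹ * F ≤ ((2:ℝ) ^ ℓ)⁻¹ * 2 ^ ℓ := by
            apply mul_le_mul_of_nonneg_left hFle hp0
        _ = 1 := inv_mul_cancel₀ (ne_of_gt h2pos)
    have hmgf := forc_mgf_bound P T 𝒢 f ℓfun ℓ p hp0 hf01 hfmeas hℓmeas hℓindep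
      (fun t ht => hℓdist t ht ℓ hℓ) F hfbudget hpF
    -- integrability of exp ∘ S
    have hexpint : Integrable (fun ω => Real.exp (S ℓ ω)) P := by
      apply forc_integrable P (hSmeas ℓ).exp (C := Real.exp T)
      intro ω
      rw [abs_of_nonneg (Real.exp_pos _).le]
      apply Real.exp_le_exp.mpr
      calc S ℓ ω ≤ ∑ t ∈ Finset.Icc 1 T, (1:ℝ) := by
            apply Finset.sum_le_sum
            intro t ht
            rcases hf01 t ht ω with h | h <;> split <;> simp [h]
        _ = T := by rw [Finset.sum_const, Nat.card_Icc]; simp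
    have hmarkov := mul_meas_ge_le_integral_of_nonneg
      (Filter.Eventually.of_forall fun ω => (Real.exp_pos (S ℓ ω)).le) hexpint (Real.exp B)
    have hseteq : {ω | Real.exp B ≤ Real.exp (S ℓ ω)} = {ω | B ≤ S ℓ ω} := by
      ext ω; simp [Real.exp_le_exp]
    rw [hseteq] at hmarkov
    have hBpos : (0:ℝ) < Real.exp B := Real.exp_pos _
    have htoReal : (P {ω | B ≤ S ℓ ω}).toReal ≤ δ / (2 * L) := by
      have h1 : (P {ω | B ≤ S ℓ ω}).toReal ≤ Real.exp (Real.exp 1 - 1) / Real.exp B := by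
        rw [le_div_iff₀ hBpos, mul_comm]
        exact hmarkov.trans hmgf
      refine h1.trans ?_
      rw [← Real.exp_sub]
      have harg : Real.exp 1 - 1 - B = (Real.exp 1 - 4) + (- Real.log (2 * L / δ)) := by
        rw [hB_def]; ring
      rw [harg, Real.exp_add, Real.exp_neg, Real.exp_log hxpos, inv_div]
      have h2 : Real.exp (Real.exp 1 - 4) ≤ 1 := by
        apply Real.exp_le_one_iff.mpr
        have := Real.exp_one_lt_d9
        linarith
      have h3 : (0:ℝ) ≤ δ / (2 * L) := by positivity
      nlinarith
    rw [← ENNReal.ofReal_toReal (measure_ne_top P _)]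
    exact ENNReal.ofReal_le_ofReal htoReal
  -- the good set and its complement
  set G : Set Ω := {ω | ∀ ℓ ∈ Finset.Icc 2 L, (F:ℝ) ≤ 2 ^ ℓ → S ℓ ω ≤ B} with hG_def
  have hGmeas : MeasurableSet G := by
    have : G = ⋂ ℓ ∈ Finset.Icc 2 L, {ω | (F:ℝ) ≤ 2 ^ ℓ → S ℓ ω ≤ B} := by
      ext ω; simp [hG_def]
    rw [this]
    apply Set.Finite.measurableSet_biInter (Finset.finite_toSet _)
    intro ℓ _
    by_cases h : (F:ℝ) ≤ 2 ^ ℓ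
    · have : {ω | (F:ℝ) ≤ 2 ^ ℓ → S ℓ ω ≤ B} = {ω | S ℓ ω ≤ B} := by
        ext ω; simp [h]
      rw [this]
      exact measurableSet_le (hSmeas ℓ) measurable_const
    · have : {ω | (F:ℝ) ≤ 2 ^ ℓ → S ℓ ω ≤ B} = Set.univ := by
        ext ω; simp [h]
      rw [this]; exact MeasurableSet.univ
  have hGc : P Gᶜ ≤ ENNReal.ofReal (δ / 2) := by
    have hsub : Gᶜ ⊆ ⋃ ℓ ∈ Finset.Icc 2 L,
        (if (F:ℝ) ≤ 2 ^ ℓ then {ω | B ≤ S ℓ ω} else ∅) := by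
      intro ω hω
      simp only [hG_def, Set.mem_compl_iff, Set.mem_setOf_eq, not_forall] at hω
      obtain ⟨ℓ, hℓ, hFle, hnot⟩ := hω
      apply Set.mem_biUnion hℓ
      rw [if_pos hFle]
      exact (not_le.mp hnot).le
    calc P Gᶜ ≤ P (⋃ ℓ ∈ Finset.Icc 2 L,
          (if (F:ℝ) ≤ 2 ^ ℓ then {ω | B ≤ S ℓ ω} else ∅)) := measure_mono hsub
      _ ≤ ∑ ℓ ∈ Finset.Icc 2 L,
          P (if (F:ℝ) ≤ 2 ^ ℓ then {ω | B ≤ S ℓ ω} else ∅) :=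
          measure_biUnion_finset_le _ _
      _ ≤ ∑ ℓ ∈ Finset.Icc 2 L, ENNReal.ofReal (δ / (2 * L)) := by
          apply Finset.sum_le_sum
          intro ℓ hℓ
          by_cases h : (F:ℝ) ≤ 2 ^ ℓ
          · rw [if_pos h]; exact htail ℓ hℓ h
          · rw [if_neg h]; simp
      _ = (Finset.Icc 2 L).card • ENNReal.ofReal (δ / (2 * L)) := by
          rw [Finset.sum_const]
      _ ≤ (L : ENNReal) * ENNReal.ofReal (δ / (2 * L)) := by
          rw [nsmul_eq_mul]
          apply mul_le_mul_left
          have hcard : (Finset.Icc 2 L).card ≤ L := by rw [Nat.card_Icc]; omega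
          exact Nat.cast_le.mpr hcard
      _ = ENNReal.ofReal (δ / 2) := by
          rw [← ENNReal.ofReal_natCast L, ← ENNReal.ofReal_mul (by positivity)]
          congr 1
          field_simp
  have hcompl : P G = 1 - P Gᶜ := by
    rw [← prob_compl_eq_one_sub hGmeas.compl, compl_compl]
  calc ENNReal.ofReal (1 - δ / 2)
      = 1 - ENNReal.ofReal (δ / 2) := by
        rw [ENNReal.ofReal_sub _ (by positivity)]
        simp
    _ ≤ 1 - P Gᶜ := tsub_le_tsub_left hGc 1
    _ = P G := hcompl.symm
end
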